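/- arXiv:2210.00360 — 3 statements merged into one kernel-verified Lean document; each statement's English description precedes it below -/
import Mathlib

section
/- Let N ≥ 1, p > 0, and let x ∈ Δ_N be an (N,p)-minimizer. If x_{k−1} ≠ 0 for some k ∈ [2−N:0], then x_k ≥ x_{k+1} ≥ … ≥ x_0 ≥ p; in other words, the minimizing sequence on its support, augmented by p on the right, is nonincreasing except possibly at its leftmost term. -/
open Finset Filter Topology
open scoped ENNReal

/-- Interval average `a_{[a:b]}(x) = (x_a + … + x_b)/(b-a+1)`. -/
noncomputable def iavg (x : ℤ → ℝ) (a b : ℤ) : ℝ :=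
  (∑ j ∈ Finset.Icc a b, x j) / ((b - a + 1 : ℤ) : ℝ)

/-- Maximal forward average `m_i^+(x) = sup_{r ≥ 1} a_{[i+1 : i+r]}(x)`
(cyclic problem). -/
noncomputable def mplus (x : ℤ → ℝ) (i : ℤ) : ℝ :=
  sSup {a : ℝ | ∃ r : ℕ, 1 ≤ r ∧ a = iavg x (i + 1) (i + (r : ℤ))}

/-- The cyclic sum `S_n^max(x) = Σ_{i=1}^n x_i / m_i^+(x)`, valued in `ℝ≥0∞`
(a term with `x_i = 0` is `0`). -/
noncomputable def SmaxE (n : ℕ) (x : ℤ → ℝ) : ℝ≥0∞ :=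
  ∑ i ∈ Finset.Icc (1 : ℤ) (n : ℤ), ENNReal.ofReal (x i) / ENNReal.ofReal (mplus x i)

/-- `Φ_n`: infimum of `S_n^max(x)` over nonnegative `n`-periodic `x ≠ 0`. -/
noncomputable def PhiE (n : ℕ) : ℝ≥0∞ :=
  sInf {t : ℝ≥0∞ | ∃ x : ℤ → ℝ, (∀ i, 0 ≤ x i) ∧ (∀ i, x (i + (n : ℤ)) = x i) ∧
    (∃ i, x i ≠ 0) ∧ t = SmaxE n x}

/-- Non-cyclic maximal forward average for `i < 0`:
`m_i^+(x) = max_{1 ≤ r ≤ −i} (x_{i+1} + … + x_{i+r})/r`. -/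
noncomputable def mNeg (x : ℤ → ℝ) (i : ℤ) : ℝ :=
  sSup {a : ℝ | ∃ r : ℤ, 1 ≤ r ∧ r ≤ -i ∧
    a = (∑ j ∈ Finset.Icc (i + 1) (i + r), x j) / (r : ℝ)}

/-- `T(x,p) = Σ_{i ≤ −1} x_i/m_i^+(x) + x_0/p`, valued in `ℝ≥0∞`: a term with
`x_i = 0` is `0`, and the value is `+∞` if `x_i > 0` and `m_i^+(x) = 0` for
some `i ≤ −1`. -/
noncomputable def Tval (x : ℤ → ℝ) (p : ℝ) : ℝ≥0∞ :=
  (∑' i : {z : ℤ // z ≤ -1}, ENNReal.ofReal (x i) / ENNReal.ofReal (mNeg x i)) +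
    ENNReal.ofReal (x 0) / ENNReal.ofReal p

/-- `Δ_N`: sequences `(x_i)_{i ≤ 0}` of nonnegative reals with `x_i = 0` for
`i ≤ -N` and `x_{1−N} + … + x_0 = 1` (encoded as functions on `ℤ` vanishing
at positive indices). -/
def Delta (N : ℕ) : Set (ℤ → ℝ) :=
  {x | (∀ i, 0 ≤ x i) ∧ (∀ i : ℤ, i ≤ -(N : ℤ) → x i = 0) ∧
    (∀ i : ℤ, 0 < i → x i = 0) ∧ ∑ i ∈ Finset.Icc (1 - (N : ℤ)) 0, x i = 1}

/-- `T_N*(p) = inf_{x ∈ Δ_N} T(x,p)`. -/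
noncomputable def Tstar (N : ℕ) (p : ℝ) : ℝ≥0∞ :=
  sInf {t : ℝ≥0∞ | ∃ x ∈ Delta N, t = Tval x p}

namespace Aux

noncomputable def avgw (x : ℤ → ℝ) (i r : ℤ) : ℝ :=
  (∑ j ∈ Finset.Icc (i + 1) (i + r), x j) / (r : ℝ)

lemma mNeg_isGreatest (x : ℤ → ℝ) {i : ℤ} (hi : i ≤ -1) :
    IsGreatest {a : ℝ | ∃ r : ℤ, 1 ≤ r ∧ r ≤ -i ∧
      a = (∑ j ∈ Finset.Icc (i + 1) (i + r), x j) / (r : ℝ)} (mNeg x i) := by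
  have hset : {a : ℝ | ∃ r : ℤ, 1 ≤ r ∧ r ≤ -i ∧
      a = (∑ j ∈ Finset.Icc (i + 1) (i + r), x j) / (r : ℝ)}
      = (fun r => avgw x i r) '' (Set.Icc 1 (-i)) := by
    ext a
    constructor
    · rintro ⟨r, h1, h2, rfl⟩; exact ⟨r, ⟨h1, h2⟩, rfl⟩
    · rintro ⟨r, ⟨h1, h2⟩, rfl⟩; exact ⟨r, h1, h2, rfl⟩
  have hfin : ({a : ℝ | ∃ r : ℤ, 1 ≤ r ∧ r ≤ -i ∧
      a = (∑ j ∈ Finset.Icc (i + 1) (i + r), x j) / (r : ℝ)}).Finite := by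
    rw [hset]; exact (Set.finite_Icc _ _).image _
  have hne : ({a : ℝ | ∃ r : ℤ, 1 ≤ r ∧ r ≤ -i ∧
      a = (∑ j ∈ Finset.Icc (i + 1) (i + r), x j) / (r : ℝ)}).Nonempty :=
    ⟨avgw x i 1, 1, le_refl _, by linarith, rfl⟩
  constructor
  · exact hne.csSup_mem hfin
  · exact fun a ha => le_csSup hfin.bddAbove ha

lemma le_mNeg (x : ℤ → ℝ) {i r : ℤ} (hi : i ≤ -1) (h1 : 1 ≤ r) (h2 : r ≤ -i) :
    avgw x i r ≤ mNeg x i :=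
  (mNeg_isGreatest x hi).2 ⟨r, h1, h2, rfl⟩

lemma mNeg_exists (x : ℤ → ℝ) {i : ℤ} (hi : i ≤ -1) :
    ∃ r : ℤ, 1 ≤ r ∧ r ≤ -i ∧ mNeg x i = avgw x i r := by
  obtain ⟨r, h1, h2, h3⟩ := (mNeg_isGreatest x hi).1
  exact ⟨r, h1, h2, h3⟩

lemma mNeg_le (x : ℤ → ℝ) {i : ℤ} (hi : i ≤ -1) {B : ℝ}
    (h : ∀ r : ℤ, 1 ≤ r → r ≤ -i → avgw x i r ≤ B) : mNeg x i ≤ B := by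
  obtain ⟨r, h1, h2, h3⟩ := mNeg_exists x hi
  rw [h3]; exact h r h1 h2

lemma avgw_nonneg {x : ℤ → ℝ} (hx : ∀ j, 0 ≤ x j) {i r : ℤ} (h1 : 1 ≤ r) :
    0 ≤ avgw x i r := by
  apply div_nonneg (Finset.sum_nonneg fun j _ => hx j)
  exact_mod_cast (by linarith : (0:ℤ) ≤ r)

lemma mNeg_nonneg {x : ℤ → ℝ} (hx : ∀ j, 0 ≤ x j) {i : ℤ} (hi : i ≤ -1) :
    0 ≤ mNeg x i :=
  le_trans (avgw_nonneg hx le_rfl) (le_mNeg x hi le_rfl (by linarith))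

lemma avgw_congr {x y : ℤ → ℝ} {i r : ℤ}
    (h : ∀ j, i + 1 ≤ j → j ≤ i + r → x j = y j) : avgw x i r = avgw y i r := by
  unfold avgw
  congr 1
  exact Finset.sum_congr rfl fun j hj => h j (Finset.mem_Icc.mp hj).1 (Finset.mem_Icc.mp hj).2

lemma mNeg_congr {x y : ℤ → ℝ} {i : ℤ} (hi : i ≤ -1)
    (h : ∀ j, i + 1 ≤ j → j ≤ 0 → x j = y j) : mNeg x i = mNeg y i := by
  have key : ∀ r : ℤ, 1 ≤ r → r ≤ -i → avgw x i r = avgw y i r := by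
    intro r h1 h2
    exact avgw_congr fun j hj1 hj2 => h j hj1 (by omega)
  apply le_antisymm
  · exact mNeg_le x hi fun r h1 h2 => (key r h1 h2) ▸ le_mNeg y hi h1 h2
  · exact mNeg_le y hi fun r h1 h2 => (key r h1 h2).symm ▸ le_mNeg x hi h1 h2

lemma mNeg_le_mNeg {x y : ℤ → ℝ} {i : ℤ} (hi : i ≤ -1)
    (h : ∀ r : ℤ, 1 ≤ r → r ≤ -i → ∃ r' : ℤ, 1 ≤ r' ∧ r' ≤ -i ∧ avgw x i r ≤ avgw y i r') :
    mNeg x i ≤ mNeg y i := by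
  apply mNeg_le x hi
  intro r h1 h2
  obtain ⟨r', h1', h2', hle⟩ := h r h1 h2
  exact le_trans hle (le_mNeg y hi h1' h2')

end Aux

namespace Aux

noncomputable def termE (x : ℤ → ℝ) (i : ℤ) : ℝ≥0∞ :=
  ENNReal.ofReal (x i) / ENNReal.ofReal (mNeg x i)

lemma termE_zero {x : ℤ → ℝ} {i : ℤ} (h : x i = 0) : termE x i = 0 := by
  simp [termE, h]

lemma Tval_eq_sum {N : ℕ} {x : ℤ → ℝ} (hx : x ∈ Delta N) (p : ℝ) :
    Tval x p = (∑ i ∈ Finset.Icc (1 - (N : ℤ)) (-1), termE x i) +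
      ENNReal.ofReal (x 0) / ENNReal.ofReal p := by
  unfold Tval
  congr 1
  calc ∑' (i : {z : ℤ // z ≤ -1}), ENNReal.ofReal (x i) / ENNReal.ofReal (mNeg x i)
      = ∑' (i : ℤ), Set.indicator {z : ℤ | z ≤ -1}
          (fun i => ENNReal.ofReal (x i) / ENNReal.ofReal (mNeg x i)) i :=
        by exact _root_.tsum_subtype {z : ℤ | z ≤ -1}
              (fun i => ENNReal.ofReal (x i) / ENNReal.ofReal (mNeg x i))
    _ = ∑ i ∈ Finset.Icc (1 - (N : ℤ)) (-1), termE x i := by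
        rw [tsum_eq_sum (s := Finset.Icc (1 - (N : ℤ)) (-1)) ?_]
        · apply Finset.sum_congr rfl
          intro i hi
          have hi' : i ≤ -1 := (Finset.mem_Icc.mp hi).2
          rw [Set.indicator_apply, if_pos (by exact hi')]
          rfl
        · intro i hi
          rw [Set.indicator_apply]
          by_cases h1 : i ∈ {z : ℤ | z ≤ -1}
          · rw [if_pos h1]
            have h1' : i ≤ -1 := h1
            have h2 : ¬ (1 - (N : ℤ) ≤ i) := fun hc => hi (Finset.mem_Icc.mpr ⟨hc, h1'⟩)
            have hx0 : x i = 0 := hx.2.1 i (by omega)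
            simp [hx0]
          · rw [if_neg h1]

lemma Tval_min_le {N : ℕ} {p : ℝ} {x : ℤ → ℝ} (hmin : Tval x p = Tstar N p)
    {y : ℤ → ℝ} (hy : y ∈ Delta N) : Tval x p ≤ Tval y p := by
  rw [hmin]
  exact sInf_le ⟨y, hy, rfl⟩

/-- the uniform competitor -/
lemma Tstar_lt_top (N : ℕ) (hN : 1 ≤ N) {p : ℝ} (hp : 0 < p) {x : ℤ → ℝ}
    (hx : x ∈ Delta N) (hmin : Tval x p = Tstar N p) : Tval x p ≠ ⊤ := by
  set u : ℤ → ℝ := fun i => if 1 - (N : ℤ) ≤ i ∧ i ≤ 0 then (N : ℝ)⁻¹ else 0 with hu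
  have hNpos : (0:ℝ) < N := by exact_mod_cast hN
  have hu_mem : u ∈ Delta N := by
    refine ⟨fun i => ?_, fun i hi => ?_, fun i hi => ?_, ?_⟩
    · by_cases h : 1 - (N : ℤ) ≤ i ∧ i ≤ 0
      · rw [hu]; simp only; rw [if_pos h]; positivity
      · rw [hu]; simp only; rw [if_neg h]
    · have hni : ¬ (1 - (N : ℤ) ≤ i ∧ i ≤ 0) := by omega
      rw [hu]; simp only; rw [if_neg hni]
    · have hni : ¬ (1 - (N : ℤ) ≤ i ∧ i ≤ 0) := by omega
      rw [hu]; simp only; rw [if_neg hni]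
    · have : ∀ i ∈ Finset.Icc (1 - (N : ℤ)) 0, u i = (N : ℝ)⁻¹ := by
        intro i hi
        have := Finset.mem_Icc.mp hi
        rw [hu]; simp only; rw [if_pos this]
      rw [Finset.sum_congr rfl this, Finset.sum_const, Int.card_Icc]
      have : (0 + 1 - (1 - (N:ℤ))).toNat = N := by omega
      rw [this, nsmul_eq_mul]
      field_simp
  have hval : Tval u p ≠ ⊤ := by
    rw [Tval_eq_sum hu_mem]
    have h1 : (∑ i ∈ Finset.Icc (1 - (N : ℤ)) (-1), termE u i) ≠ ⊤ := by
      rw [← lt_top_iff_ne_top, ENNReal.sum_lt_top]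
      intro i hi
      have hi' := Finset.mem_Icc.mp hi
      have hmN : (N:ℝ)⁻¹ ≤ mNeg u i := by
        have h1 : Aux.avgw u i 1 = u (i + 1) := by
          simp [Aux.avgw]
        have h2 : u (i + 1) = (N:ℝ)⁻¹ := by
          have hc : 1 - (N : ℤ) ≤ i + 1 ∧ i + 1 ≤ 0 := by omega
          rw [hu]; simp only; rw [if_pos hc]
        calc (N:ℝ)⁻¹ = Aux.avgw u i 1 := by rw [h1, h2]
        _ ≤ mNeg u i := Aux.le_mNeg u hi'.2 le_rfl (by omega)
      apply ENNReal.div_lt_top ENNReal.ofReal_ne_top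
      intro hc
      rw [ENNReal.ofReal_eq_zero] at hc
      have : (0:ℝ) < (N:ℝ)⁻¹ := by positivity
      linarith
    have h2 : ENNReal.ofReal (u 0) / ENNReal.ofReal p ≠ ⊤ := by
      apply ne_of_lt
      apply ENNReal.div_lt_top ENNReal.ofReal_ne_top
      simp only [ne_eq, ENNReal.ofReal_eq_zero, not_le]
      linarith
    exact ENNReal.add_ne_top.mpr ⟨h1, h2⟩
  exact ne_top_of_le_ne_top hval (Tval_min_le hmin hu_mem)

end Aux

namespace Aux

lemma sum_Icc_split {M : Type*} [AddCommMonoid M] (f : ℤ → M) {a b c : ℤ}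
    (h1 : a ≤ b + 1) (h2 : b ≤ c) :
    ∑ i ∈ Finset.Icc a c, f i = (∑ i ∈ Finset.Icc a b, f i) + ∑ i ∈ Finset.Icc (b+1) c, f i := by
  rw [← Finset.sum_union]
  · apply Finset.sum_congr _ (fun _ _ => rfl)
    ext j
    simp only [Finset.mem_Icc, Finset.mem_union]
    omega
  · rw [Finset.disjoint_left]
    intro j hj1 hj2
    simp only [Finset.mem_Icc] at hj1 hj2
    omega

lemma termE_le_Tval {N : ℕ} {x : ℤ → ℝ} (hx : x ∈ Delta N) (p : ℝ) {i : ℤ}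
    (hi : i ∈ Finset.Icc (1 - (N:ℤ)) (-1)) : termE x i ≤ Tval x p := by
  rw [Tval_eq_sum hx]
  calc termE x i ≤ ∑ j ∈ Finset.Icc (1 - (N:ℤ)) (-1), termE x j :=
        Finset.single_le_sum (fun j _ => zero_le) hi
  _ ≤ _ := le_self_add

lemma mNeg_pos {N : ℕ} {x : ℤ → ℝ} (hx : x ∈ Delta N) {p : ℝ}
    (hfin : Tval x p ≠ ⊤) {i : ℤ} (hi : i ∈ Finset.Icc (1 - (N:ℤ)) (-1))
    (hpos : 0 < x i) : 0 < mNeg x i := by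
  rcases lt_or_ge 0 (mNeg x i) with h | h
  · exact h
  · exfalso
    have hm0 : mNeg x i = 0 :=
      le_antisymm h (mNeg_nonneg hx.1 (Finset.mem_Icc.mp hi).2)
    have : termE x i = ⊤ := by
      rw [termE, hm0, ENNReal.ofReal_zero]
      exact ENNReal.div_zero (by simp [ENNReal.ofReal_eq_zero]; linarith)
    exact hfin (top_le_iff.mp (this ▸ termE_le_Tval hx p hi))

lemma mNeg_scale {x y : ℤ → ℝ} {c : ℝ} (hc : 0 < c) {i : ℤ} (hi : i ≤ -1)
    (h : ∀ j, i + 1 ≤ j → j ≤ 0 → y j = c * x j) : mNeg y i = c * mNeg x i := by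
  have key : ∀ r : ℤ, 1 ≤ r → r ≤ -i → avgw y i r = c * avgw x i r := by
    intro r h1 h2
    unfold avgw
    have hs : ∑ j ∈ Finset.Icc (i+1) (i+r), y j = c * ∑ j ∈ Finset.Icc (i+1) (i+r), x j := by
      rw [Finset.mul_sum]
      apply Finset.sum_congr rfl
      intro j hj
      have := Finset.mem_Icc.mp hj
      exact h j this.1 (by omega)
    rw [hs, mul_div_assoc]
  apply le_antisymm
  · apply mNeg_le y hi
    intro r h1 h2
    rw [key r h1 h2]
    exact mul_le_mul_of_nonneg_left (le_mNeg x hi h1 h2) hc.le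
  · obtain ⟨r, h1, h2, h3⟩ := mNeg_exists x hi
    rw [h3, ← key r h1 h2]
    exact le_mNeg y hi h1 h2

lemma partB (N : ℕ) (p : ℝ) (hp : 0 < p) (x : ℤ → ℝ) (hx : x ∈ Delta N)
    (hmin : Tval x p = Tstar N p) (hfin : Tval x p ≠ ⊤)
    (b : ℤ) (hb1 : 1 - (N:ℤ) ≤ b) (hb2 : b ≤ -1) (hbne : x b ≠ 0)
    (hbmin : ∀ i, i < b → x i = 0) : p ≤ x 0 := by
  obtain ⟨hnn, hzero, hpos', hsum⟩ := hx
  have hxbpos : 0 < x b := lt_of_le_of_ne (hnn b) (Ne.symm hbne)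
  have hb_mem : b ∈ Finset.Icc (1 - (N:ℤ)) 0 := Finset.mem_Icc.mpr ⟨hb1, by omega⟩
  have hb_mem' : b ∈ Finset.Icc (1 - (N:ℤ)) (-1) := Finset.mem_Icc.mpr ⟨hb1, hb2⟩
  -- tail sum
  have hsplit := sum_Icc_split x (a := 1 - (N:ℤ)) (b := b) (c := 0) (by omega) (by omega)
  rw [hsum] at hsplit
  have hS1_ge : x b ≤ ∑ i ∈ Finset.Icc (1 - (N:ℤ)) b, x i :=
    Finset.single_le_sum (fun i _ => hnn i) (Finset.mem_Icc.mpr ⟨hb1, le_refl b⟩)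
  have hS2_nonneg : 0 ≤ ∑ i ∈ Finset.Icc (b+1) 0, x i :=
    Finset.sum_nonneg fun i _ => hnn i
  have hS2_le : ∑ i ∈ Finset.Icc (b+1) 0, x i ≤ 1 - x b := by linarith
  -- x b < 1
  have hxb_lt1 : x b < 1 := by
    by_contra hcon
    push_neg at hcon
    have hS2_0 : ∑ i ∈ Finset.Icc (b+1) 0, x i = 0 := le_antisymm (by linarith) hS2_nonneg
    have hall0 : ∀ i ∈ Finset.Icc (b+1) 0, x i = 0 :=
      (Finset.sum_eq_zero_iff_of_nonneg (fun i _ => hnn i)).mp hS2_0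
    have hm0 : mNeg x b = 0 := by
      obtain ⟨r, h1, h2, h3⟩ := mNeg_exists x hb2
      rw [h3]
      unfold avgw
      rw [Finset.sum_congr rfl (fun j hj => by
        have := Finset.mem_Icc.mp hj
        exact hall0 j (Finset.mem_Icc.mpr ⟨this.1, by omega⟩)), Finset.sum_const,
        smul_zero, zero_div]
    have : termE x b = ⊤ := by
      rw [termE, hm0, ENNReal.ofReal_zero]
      exact ENNReal.div_zero (by simp [ENNReal.ofReal_eq_zero]; linarith)
    exact hfin (top_le_iff.mp (this ▸ termE_le_Tval ⟨hnn, hzero, hpos', hsum⟩ p hb_mem'))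
  have hβ : 0 < 1 - x b := by linarith
  set c : ℝ := (1 - x b)⁻¹ with hcdef
  have hc : 0 < c := by positivity
  -- competitor
  set y : ℤ → ℝ := fun i => if i = b then 0 else c * x i with hy
  have hy_mem : y ∈ Delta N := by
    refine ⟨fun i => ?_, fun i hi => ?_, fun i hi => ?_, ?_⟩
    · rw [hy]; simp only
      by_cases h : i = b
      · rw [if_pos h]
      · rw [if_neg h]; exact mul_nonneg hc.le (hnn i)
    · rw [hy]; simp only
      by_cases h : i = b
      · rw [if_pos h]
      · rw [if_neg h, hzero i hi, mul_zero]
    · rw [hy]; simp only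
      by_cases h : i = b
      · rw [if_pos h]
      · rw [if_neg h, hpos' i hi, mul_zero]
    · rw [← Finset.insert_erase hb_mem, Finset.sum_insert (Finset.notMem_erase _ _)]
      have hyb : y b = 0 := by rw [hy]; simp
      rw [hyb, zero_add]
      have : ∀ i ∈ (Finset.Icc (1 - (N:ℤ)) 0).erase b, y i = c * x i := by
        intro i hi
        have hne := Finset.ne_of_mem_erase hi
        rw [hy]; simp only; rw [if_neg hne]
      rw [Finset.sum_congr rfl this, ← Finset.mul_sum]
      have herase : ∑ i ∈ (Finset.Icc (1 - (N:ℤ)) 0).erase b, x i = 1 - x b := by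
        have := Finset.add_sum_erase _ x hb_mem
        rw [hsum] at this
        linarith
      rw [herase, hcdef]
      field_simp
  -- term comparison
  have hterm_eq : ∀ i ∈ (Finset.Icc (1 - (N:ℤ)) (-1)).erase b, termE y i = termE x i := by
    intro i hi
    have hne := Finset.ne_of_mem_erase hi
    have hi' := Finset.mem_Icc.mp (Finset.mem_of_mem_erase hi)
    rcases lt_or_gt_of_ne hne with hlt | hgt
    · -- i < b : both terms are 0
      have hx0 : x i = 0 := hbmin i hlt
      have hy0 : y i = 0 := by rw [hy]; simp only; rw [if_neg hne, hx0, mul_zero]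
      rw [termE_zero hx0, termE_zero hy0]
    · -- i > b
      have hmscale : mNeg y i = c * mNeg x i := by
        apply mNeg_scale hc hi'.2
        intro j hj1 hj2
        have : j ≠ b := by omega
        rw [hy]; simp only; rw [if_neg this]
      have hyi : y i = c * x i := by rw [hy]; simp only; rw [if_neg hne]
      rw [termE, termE, hyi, hmscale, ENNReal.ofReal_mul hc.le, ENNReal.ofReal_mul hc.le,
        ENNReal.mul_div_mul_left _ _ (by simp [ENNReal.ofReal_eq_zero]; linarith)
          ENNReal.ofReal_ne_top]
  -- assemble sums
  have hsum_x : ∑ i ∈ Finset.Icc (1 - (N:ℤ)) (-1), termE x i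
      = termE x b + ∑ i ∈ (Finset.Icc (1 - (N:ℤ)) (-1)).erase b, termE x i :=
    (Finset.add_sum_erase _ _ hb_mem').symm
  have hsum_y : ∑ i ∈ Finset.Icc (1 - (N:ℤ)) (-1), termE y i
      = ∑ i ∈ (Finset.Icc (1 - (N:ℤ)) (-1)).erase b, termE x i := by
    rw [← Finset.add_sum_erase _ _ hb_mem']
    have hyb : y b = 0 := by rw [hy]; simp
    rw [termE_zero hyb, zero_add]
    exact Finset.sum_congr rfl hterm_eq
  have hy0val : y 0 = c * x 0 := by
    rw [hy]; simp only; rw [if_neg (by omega : (0:ℤ) ≠ b)]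
  -- minimality
  have hle := Tval_min_le hmin hy_mem
  rw [Tval_eq_sum ⟨hnn, hzero, hpos', hsum⟩, Tval_eq_sum hy_mem, hsum_x, hsum_y, hy0val] at hle
  have hrest_ne : (∑ i ∈ (Finset.Icc (1 - (N:ℤ)) (-1)).erase b, termE x i) ≠ ⊤ := by
    intro hcon
    apply hfin
    rw [Tval_eq_sum ⟨hnn, hzero, hpos', hsum⟩, hsum_x, hcon]
    simp
  have hkey : termE x b + ENNReal.ofReal (x 0) / ENNReal.ofReal p
      ≤ ENNReal.ofReal (c * x 0) / ENNReal.ofReal p := by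
    have h1 : (∑ i ∈ (Finset.Icc (1 - (N:ℤ)) (-1)).erase b, termE x i) +
        (termE x b + ENNReal.ofReal (x 0) / ENNReal.ofReal p)
        ≤ (∑ i ∈ (Finset.Icc (1 - (N:ℤ)) (-1)).erase b, termE x i) +
        (ENNReal.ofReal (c * x 0) / ENNReal.ofReal p) := by
      calc _ = termE x b + (∑ i ∈ (Finset.Icc (1 - (N:ℤ)) (-1)).erase b, termE x i) +
          ENNReal.ofReal (x 0) / ENNReal.ofReal p := by ring
      _ ≤ _ := hle
    exact (ENNReal.add_le_add_iff_left hrest_ne).mp h1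
  -- to reals
  have hM_pos : 0 < mNeg x b := mNeg_pos ⟨hnn, hzero, hpos', hsum⟩ hfin hb_mem' hxbpos
  have htermb : termE x b = ENNReal.ofReal (x b / mNeg x b) := by
    rw [termE, ENNReal.ofReal_div_of_pos hM_pos]
  rw [htermb, ← ENNReal.ofReal_div_of_pos hp, ← ENNReal.ofReal_div_of_pos hp,
    ← ENNReal.ofReal_add (div_nonneg hxbpos.le hM_pos.le) (div_nonneg (hnn 0) hp.le)] at hkey
  have hreal : x b / mNeg x b + x 0 / p ≤ c * x 0 / p := by
    have := (ENNReal.ofReal_le_ofReal_iff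
      (div_nonneg (mul_nonneg hc.le (hnn 0)) hp.le)).mp hkey
    linarith
  -- M_b ≤ 1 - x b
  have hM_le : mNeg x b ≤ 1 - x b := by
    obtain ⟨r, h1, h2, h3⟩ := mNeg_exists x hb2
    rw [h3]
    unfold avgw
    have hsub : ∑ j ∈ Finset.Icc (b+1) (b+r), x j ≤ ∑ j ∈ Finset.Icc (b+1) 0, x j := by
      apply Finset.sum_le_sum_of_subset_of_nonneg
      · apply Finset.Icc_subset_Icc le_rfl (by omega)
      · exact fun i _ _ => hnn i
    have hr1 : (1:ℝ) ≤ (r:ℝ) := by exact_mod_cast h1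
    have hsnn : 0 ≤ ∑ j ∈ Finset.Icc (b+1) (b+r), x j := Finset.sum_nonneg fun j _ => hnn j
    calc (∑ j ∈ Finset.Icc (b+1) (b+r), x j) / (r:ℝ) ≤ ∑ j ∈ Finset.Icc (b+1) (b+r), x j :=
          div_le_self hsnn hr1
    _ ≤ _ := le_trans hsub hS2_le
  -- x 0 > 0
  have hx0_pos : 0 < x 0 := by
    by_contra hcon
    push_neg at hcon
    have hx00 : x 0 = 0 := le_antisymm hcon (hnn 0)
    rw [hx00] at hreal
    simp only [zero_div, mul_zero, add_zero] at hreal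
    have : 0 < x b / mNeg x b := by positivity
    linarith
  -- final algebra
  have h2 : x b / (1 - x b) ≤ x b / mNeg x b :=
    div_le_div_of_nonneg_left hxbpos.le hM_pos hM_le
  have hkey2 : x b / (1 - x b) + x 0 / p ≤ c * x 0 / p := le_trans (by linarith) hreal
  rw [hcdef] at hkey2
  have hfin2 : x b / (1 - x b) ≤ x 0 * x b / ((1 - x b) * p) := by
    have : (1 - x b)⁻¹ * x 0 / p - x 0 / p = x 0 * x b / ((1 - x b) * p) := by
      field_simp
      ring
    linarith
  have hfin3 : x b * ((1 - x b) * p) ≤ (x 0 * x b) * (1 - x b) := by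
    rw [div_le_div_iff₀ (by positivity) (by positivity)] at hfin2
    linarith
  have := mul_pos hxbpos hβ
  nlinarith
end Aux

namespace Aux

lemma sum_shift {M : Type*} [AddCommMonoid M] (f : ℤ → M) (a b : ℤ) :
    ∑ j ∈ Finset.Icc (a+1) (b+1), f j = ∑ j ∈ Finset.Icc a b, f (j+1) := by
  rw [← Finset.map_add_right_Icc a b 1, Finset.sum_map]
  rfl

/-- the deletion competitor: delete position `W`, give its mass to `W+1`,
shift everything left of `W` one step to the right. -/
noncomputable def zdel (x : ℤ → ℝ) (b W : ℤ) : ℤ → ℝ := fun j =>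
  if j ≤ b then 0 else if j ≤ W then x (j-1) else if j = W+1 then x W + x (W+1) else x j

section zdel

variable {N : ℕ} {x : ℤ → ℝ} {b W : ℤ}

lemma zdel_at_le_b {j : ℤ} (hj : j ≤ b) : zdel x b W j = 0 := by
  simp only [zdel]; rw [if_pos hj]

lemma zdel_at_mid {j : ℤ} (hj1 : b < j) (hj2 : j ≤ W) : zdel x b W j = x (j-1) := by
  simp only [zdel]; rw [if_neg (by omega), if_pos hj2]

lemma zdel_at_merge (hbW : b ≤ W) : zdel x b W (W+1) = x W + x (W+1) := by
  simp only [zdel]; rw [if_neg (by omega), if_neg (by omega)]; simp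

lemma zdel_at_high (hbW : b ≤ W) {j : ℤ} (hj : W + 2 ≤ j) : zdel x b W j = x j := by
  simp only [zdel]; rw [if_neg (by omega), if_neg (by omega), if_neg (by omega)]

/-- window sums of the deletion competitor crossing the merge point -/
lemma zdel_sum_cross (hbW : b ≤ W) {i e : ℤ} (hi1 : b ≤ i) (hi2 : i ≤ W) (he : W + 1 ≤ e) :
    ∑ j ∈ Finset.Icc (i+1) e, zdel x b W j = ∑ j ∈ Finset.Icc i e, x j := by
  have hL : ∑ j ∈ Finset.Icc (i+1) e, zdel x b W j
      = (∑ j ∈ Finset.Icc (i+1) W, zdel x b W j) + ∑ j ∈ Finset.Icc (W+1) e, zdel x b W j :=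
    sum_Icc_split _ (by omega) (by omega)
  have h1 : ∑ j ∈ Finset.Icc (i+1) W, zdel x b W j = ∑ j ∈ Finset.Icc i (W-1), x j := by
    have hss := sum_shift (zdel x b W) i (W-1)
    rw [show (W - 1 + 1 : ℤ) = W from by ring] at hss
    rw [hss]
    apply Finset.sum_congr rfl
    intro j hj
    have hj' := Finset.mem_Icc.mp hj
    rw [zdel_at_mid (by omega) (by omega)]
    simp
  have h2 : ∑ j ∈ Finset.Icc (W+1) e, zdel x b W j
      = (x W + x (W+1)) + ∑ j ∈ Finset.Icc (W+2) e, x j := by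
    have : ∑ j ∈ Finset.Icc (W+1) e, zdel x b W j
        = (∑ j ∈ Finset.Icc (W+1) (W+1), zdel x b W j) + ∑ j ∈ Finset.Icc (W+2) e, zdel x b W j := by
      have h := sum_Icc_split (zdel x b W) (a := W+1) (b := W+1) (c := e) (by omega) (by omega)
      rw [h]
      congr 1
      apply Finset.sum_congr _ (fun _ _ => rfl)
      congr 1
      omega
    rw [this, Finset.Icc_self, Finset.sum_singleton, zdel_at_merge hbW]
    congr 1
    apply Finset.sum_congr rfl
    intro j hj
    exact zdel_at_high hbW (Finset.mem_Icc.mp hj).1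
  have hR : ∑ j ∈ Finset.Icc i e, x j
      = (∑ j ∈ Finset.Icc i (W-1), x j) + ((x W + x (W+1)) + ∑ j ∈ Finset.Icc (W+2) e, x j) := by
    have hA : ∑ j ∈ Finset.Icc i e, x j
        = (∑ j ∈ Finset.Icc i (W-1), x j) + ∑ j ∈ Finset.Icc W e, x j := by
      have h := sum_Icc_split x (a := i) (b := W - 1) (c := e) (by omega) (by omega)
      rw [show (W - 1 + 1 : ℤ) = W by ring] at h
      exact h
    have hB : ∑ j ∈ Finset.Icc W e, x j = x W + ∑ j ∈ Finset.Icc (W+1) e, x j := by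
      have h := sum_Icc_split x (a := W) (b := W) (c := e) (by omega) (by omega)
      rw [h, Finset.Icc_self, Finset.sum_singleton]
    have hC : ∑ j ∈ Finset.Icc (W+1) e, x j = x (W+1) + ∑ j ∈ Finset.Icc (W+2) e, x j := by
      have h := sum_Icc_split x (a := W+1) (b := W+1) (c := e) (by omega) (by omega)
      rw [h, Finset.Icc_self, Finset.sum_singleton, show (W+1+1 : ℤ) = W+2 from by ring]
    rw [hA, hB, hC]
    ring
  rw [hL, h1, h2, hR]

/-- window sums inside the shifted block -/
lemma zdel_sum_low (hbW : b ≤ W) {i e : ℤ} (hi1 : b ≤ i) (he1 : i ≤ e) (he : e ≤ W - 1) :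
    ∑ j ∈ Finset.Icc (i+1) (e+1), zdel x b W j = ∑ j ∈ Finset.Icc i e, x j := by
  rw [sum_shift (zdel x b W) i e]
  apply Finset.sum_congr rfl
  intro j hj
  have hj' := Finset.mem_Icc.mp hj
  rw [zdel_at_mid (by omega) (by omega)]
  simp

lemma zdel_sum_at_merge (hbW : b ≤ W) {i : ℤ} (hi1 : b ≤ i) (hi2 : i ≤ W) :
    ∑ j ∈ Finset.Icc (i+1) (W+1), zdel x b W j = (∑ j ∈ Finset.Icc i W, x j) + x (W+1) := by
  rw [zdel_sum_cross hbW hi1 hi2 le_rfl]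
  have h := sum_Icc_split x (a := i) (b := W) (c := W+1) (by omega) (by omega)
  rw [h, Finset.Icc_self, Finset.sum_singleton]

lemma zdel_mem_Delta (hN : 1 ≤ N) (hx : x ∈ Delta N) (hb1 : 1 - (N:ℤ) ≤ b)
    (hbW : b ≤ W) (hW : W ≤ -1) (hbmin : ∀ i, i < b → x i = 0) :
    zdel x b W ∈ Delta N := by
  obtain ⟨hnn, hzero, hpos', hsum⟩ := hx
  refine ⟨fun i => ?_, fun i hi => ?_, fun i hi => ?_, ?_⟩
  · rcases le_or_gt i b with h | h
    · rw [zdel_at_le_b h]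
    · rcases le_or_gt i W with h2 | h2
      · rw [zdel_at_mid h h2]; exact hnn _
      · rcases eq_or_ne i (W+1) with h3 | h3
        · rw [h3, zdel_at_merge hbW]; exact add_nonneg (hnn _) (hnn _)
        · rw [zdel_at_high hbW (by omega)]; exact hnn _
  · rw [zdel_at_le_b (by omega)]
  · rw [zdel_at_high hbW (by omega)]
    exact hpos' i hi
  · have h1 : ∑ i ∈ Finset.Icc (1 - (N:ℤ)) 0, zdel x b W i
        = (∑ i ∈ Finset.Icc (1 - (N:ℤ)) b, zdel x b W i) + ∑ i ∈ Finset.Icc (b+1) 0, zdel x b W i :=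
      sum_Icc_split _ (by omega) (by omega)
    have h2 : ∑ i ∈ Finset.Icc (1 - (N:ℤ)) b, zdel x b W i = 0 := by
      apply Finset.sum_eq_zero
      intro i hi
      exact zdel_at_le_b (Finset.mem_Icc.mp hi).2
    have h3 : ∑ i ∈ Finset.Icc (b+1) 0, zdel x b W i = ∑ j ∈ Finset.Icc b 0, x j := by
      have : ∑ i ∈ Finset.Icc (b+1) 0, zdel x b W i = ∑ j ∈ Finset.Icc b 0, x j := by
        have hc := zdel_sum_cross (x := x) hbW (le_refl b) hbW (by omega : W + 1 ≤ (0:ℤ))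
        exact hc
      exact this
    have h4 : ∑ j ∈ Finset.Icc b 0, x j = 1 := by
      have h := sum_Icc_split x (a := 1 - (N:ℤ)) (b := b - 1) (c := 0) (by omega) (by omega)
      rw [show (b - 1 + 1 : ℤ) = b by ring] at h
      have h5 : ∑ i ∈ Finset.Icc (1 - (N:ℤ)) (b-1), x i = 0 :=
        Finset.sum_eq_zero fun i hi => hbmin i (by have := Finset.mem_Icc.mp hi; omega)
      rw [hsum, h5, zero_add] at h
      exact h.symm
    rw [h1, h2, h3, h4, zero_add]

/-- main window comparison: terms in the shifted block do not increase -/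
lemma zdel_mNeg_ge (hx : x ∈ Delta N) (hbW : b ≤ W) (hW : W ≤ -1)
    {i : ℤ} (hi1 : b + 1 ≤ i) (hi2 : i ≤ W) :
    mNeg x (i-1) ≤ mNeg (zdel x b W) i := by
  have hnn := hx.1
  have hi1' : i - 1 ≤ -1 := by omega
  have hi' : i ≤ -1 := by omega
  apply mNeg_le x hi1'
  intro r h1 h2
  set e : ℤ := i - 1 + r with he
  have he0 : e ≤ 0 := by omega
  rcases le_or_gt e (W-1) with hcase | hcase
  · -- e ≤ W - 1 : exact copy
    have heq : avgw x (i-1) r = avgw (zdel x b W) i r := by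
      unfold avgw
      have h := zdel_sum_low (x := x) (b := b) (W := W) hbW (by omega : b ≤ i)
        (by omega : i ≤ i - 1 + r) (by omega : i - 1 + r ≤ W - 1)
      have hIdx : Finset.Icc (i-1+1) (i-1+r) = Finset.Icc i (i-1+r) := by
        congr 1; omega
      rw [hIdx, ← h, show (i - 1 + r + 1 : ℤ) = i + r from by ring]
    rw [heq]
    exact le_mNeg _ hi' h1 (by omega)
  · rcases eq_or_lt_of_le (Int.add_one_le_iff.mpr hcase) with hW' | hW'
    · -- e = W : use the window ending at W+1, same length
      have hsum : ∑ j ∈ Finset.Icc (i+1) (i+r), zdel x b W j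
          = (∑ j ∈ Finset.Icc i W, x j) + x (W+1) := by
        have h := zdel_sum_at_merge (x := x) (b := b) (W := W) hbW (by omega : b ≤ i) hi2
        rw [show (i + r : ℤ) = W + 1 from by omega]
        exact h
      have hle : avgw x (i-1) r ≤ avgw (zdel x b W) i r := by
        unfold avgw
        rw [hsum]
        have hIdx : Finset.Icc (i-1+1) (i-1+r) = Finset.Icc i W := by
          congr 1 <;> omega
        rw [hIdx]
        have hrpos : (0:ℝ) < (r:ℝ) := by exact_mod_cast (by omega : (0:ℤ) < r)
        apply div_le_div_of_nonneg_right ?_ hrpos.le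
        have := hnn (W+1)
        linarith
      exact le_trans hle (le_mNeg _ hi' h1 (by omega))
    · -- e ≥ W + 1 : shorter window, same sum
      have hsum : ∑ j ∈ Finset.Icc (i+1) (i+(r-1)), zdel x b W j
          = ∑ j ∈ Finset.Icc (i-1+1) (i-1+r), x j := by
        have h := zdel_sum_cross (x := x) (b := b) (W := W) hbW (by omega : b ≤ i) hi2
          (by omega : W + 1 ≤ e)
        rw [show (i + (r-1) : ℤ) = e from by omega]
        rw [h]
        apply Finset.sum_congr _ (fun _ _ => rfl)
        congr 1
        omega
      have hr1 : (1:ℤ) ≤ r - 1 := by omega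
      have hle : avgw x (i-1) r ≤ avgw (zdel x b W) i (r-1) := by
        unfold avgw
        rw [hsum]
        have hS : 0 ≤ ∑ j ∈ Finset.Icc (i-1+1) (i-1+r), x j := Finset.sum_nonneg fun j _ => hnn j
        have c1 : (0:ℝ) < ((r:ℤ):ℝ) - 1 := by
          have h' : (1:ℤ) < r := by omega
          have h'' : (1:ℝ) < ((r:ℤ):ℝ) := by exact_mod_cast h'
          linarith
        have c2 : ((r - 1 : ℤ):ℝ) = ((r:ℤ):ℝ) - 1 := by push_cast; ring
        rw [c2]
        apply div_le_div_of_nonneg_left hS c1 (by linarith)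
      exact le_trans hle (le_mNeg _ hi' hr1 (by omega))

lemma zdel_term_le (hx : x ∈ Delta N) (hbW : b ≤ W) (hW : W ≤ -1)
    {i : ℤ} (hi1 : b + 1 ≤ i) (hi2 : i ≤ W) :
    termE (zdel x b W) i ≤ termE x (i-1) := by
  rw [termE, termE, zdel_at_mid (by omega) hi2]
  exact ENNReal.div_le_div_left (ENNReal.ofReal_le_ofReal (zdel_mNeg_ge hx hbW hW hi1 hi2)) _

lemma zdel_mNeg_high (hbW : b ≤ W) {i : ℤ} (hi1 : W + 1 ≤ i) (hi2 : i ≤ -1) :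
    mNeg (zdel x b W) i = mNeg x i := by
  apply mNeg_congr hi2
  intro j hj1 hj2
  exact zdel_at_high hbW (by omega)

lemma zdel_term_high (hbW : b ≤ W) {i : ℤ} (hi1 : W + 2 ≤ i) (hi2 : i ≤ -1) :
    termE (zdel x b W) i = termE x i := by
  rw [termE, termE, zdel_at_high hbW hi1, zdel_mNeg_high hbW (by omega) hi2]

end zdel

end Aux

namespace Aux

lemma sum_lt_sum_of_lt {s : Finset ℤ} {f g : ℤ → ℝ≥0∞} (hle : ∀ j ∈ s, g j ≤ f j)
    {v : ℤ} (hv : v ∈ s) (hstrict : g v < f v) (hfs : ∑ j ∈ s, f j ≠ ⊤) :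
    ∑ j ∈ s, g j < ∑ j ∈ s, f j := by
  rw [← Finset.add_sum_erase s f hv, ← Finset.add_sum_erase s g hv]
  have hef : ∑ j ∈ s.erase v, f j ≠ ⊤ := by
    intro hc
    apply hfs
    rw [← Finset.add_sum_erase s f hv, hc, add_top]
  have h1 : ∑ j ∈ s.erase v, g j ≤ ∑ j ∈ s.erase v, f j :=
    Finset.sum_le_sum fun j hj => hle j (Finset.mem_of_mem_erase hj)
  calc g v + ∑ j ∈ s.erase v, g j ≤ g v + ∑ j ∈ s.erase v, f j := by gcongr
  _ = (∑ j ∈ s.erase v, f j) + g v := add_comm _ _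
  _ < (∑ j ∈ s.erase v, f j) + f v := ENNReal.add_lt_add_left hef hstrict
  _ = f v + ∑ j ∈ s.erase v, f j := add_comm _ _

lemma add3_lt {a1 b1 m mx R : ℝ≥0∞} (h1 : a1 ≤ b1) (h2 : m ≤ mx)
    (hs : a1 < b1 ∨ m < mx) (hb1 : b1 ≠ ⊤) (hmx : mx ≠ ⊤) (hR : R ≠ ⊤) :
    a1 + m + R < b1 + mx + R := by
  rcases hs with hs | hs
  · calc a1 + m + R ≤ a1 + mx + R := by gcongr
    _ = (mx + R) + a1 := by ring
    _ < (mx + R) + b1 := ENNReal.add_lt_add_left (by simp [hmx, hR]) hs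
    _ = b1 + mx + R := by ring
  · calc a1 + m + R ≤ b1 + m + R := by gcongr
    _ = (b1 + R) + m := by ring
    _ < (b1 + R) + mx := ENNReal.add_lt_add_left (by simp [hb1, hR]) hs
    _ = b1 + mx + R := by ring

/-- the master contradiction: if the deletion competitor has pointwise smaller
terms with one strict inequality, the minimizer property is violated. -/
lemma zdel_contra (N : ℕ) (hN : 1 ≤ N) (p : ℝ) (hp : 0 < p) (x : ℤ → ℝ) (hx : x ∈ Delta N)
    (hmin : Tval x p = Tstar N p) (hfin : Tval x p ≠ ⊤)
    (b : ℤ) (hb1 : 1 - (N:ℤ) ≤ b) (hbmin : ∀ i, i < b → x i = 0)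
    (W : ℤ) (hbW : b ≤ W) (hW : W ≤ -1)
    (hmerge : ENNReal.ofReal (x W + x (W+1)) /
        (if W = -1 then ENNReal.ofReal p else ENNReal.ofReal (mNeg x (W+1)))
      ≤ termE x W + ENNReal.ofReal (x (W+1)) /
        (if W = -1 then ENNReal.ofReal p else ENNReal.ofReal (mNeg x (W+1))))
    (hstrict : (∃ v, b ≤ v ∧ v ≤ W - 1 ∧ termE (zdel x b W) (v+1) < termE x v) ∨
      ENNReal.ofReal (x W + x (W+1)) /
          (if W = -1 then ENNReal.ofReal p else ENNReal.ofReal (mNeg x (W+1)))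
        < termE x W + ENNReal.ofReal (x (W+1)) /
          (if W = -1 then ENNReal.ofReal p else ENNReal.ofReal (mNeg x (W+1)))) :
    False := by
  have hz_mem : zdel x b W ∈ Delta N := zdel_mem_Delta hN hx hb1 hbW hW hbmin
  obtain ⟨hnn, hzero, hpos', hsum⟩ := hx
  have hxD : x ∈ Delta N := ⟨hnn, hzero, hpos', hsum⟩
  set D : ℝ≥0∞ := (if W = -1 then ENNReal.ofReal p else ENNReal.ofReal (mNeg x (W+1))) with hD
  set A1 : ℝ≥0∞ := ∑ j ∈ Finset.Icc b (W-1), termE (zdel x b W) (j+1) with hA1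
  set B1 : ℝ≥0∞ := ∑ j ∈ Finset.Icc b (W-1), termE x j with hB1
  set Mz : ℝ≥0∞ := ENNReal.ofReal (x W + x (W+1)) / D with hMz
  set Mx : ℝ≥0∞ := termE x W + ENNReal.ofReal (x (W+1)) / D with hMx
  set C : ℝ≥0∞ := ∑ i ∈ Finset.Icc (W+2) (-1), termE x i with hC
  set P0 : ℝ≥0∞ := ENNReal.ofReal (x 0) / ENNReal.ofReal p with hP0
  -- decomposition of the x side
  have hSx : ∑ i ∈ Finset.Icc (1 - (N:ℤ)) (-1), termE x i
      = B1 + termE x W + ∑ i ∈ Finset.Icc (W+1) (-1), termE x i := by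
    have e1 : ∑ i ∈ Finset.Icc (1 - (N:ℤ)) (-1), termE x i
        = (∑ i ∈ Finset.Icc (1 - (N:ℤ)) (b-1), termE x i) + ∑ i ∈ Finset.Icc b (-1), termE x i := by
      have h := sum_Icc_split (termE x) (a := 1 - (N:ℤ)) (b := b - 1) (c := -1)
        (by omega) (by omega)
      rw [show (b - 1 + 1 : ℤ) = b from by ring] at h
      exact h
    have e2 : ∑ i ∈ Finset.Icc (1 - (N:ℤ)) (b-1), termE x i = 0 :=
      Finset.sum_eq_zero fun i hi =>
        termE_zero (hbmin i (by have := Finset.mem_Icc.mp hi; omega))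
    have e3 : ∑ i ∈ Finset.Icc b (-1), termE x i
        = B1 + ∑ i ∈ Finset.Icc W (-1), termE x i := by
      have h := sum_Icc_split (termE x) (a := b) (b := W - 1) (c := -1) (by omega) (by omega)
      rw [show (W - 1 + 1 : ℤ) = W from by ring] at h
      exact h
    have e4 : ∑ i ∈ Finset.Icc W (-1), termE x i
        = termE x W + ∑ i ∈ Finset.Icc (W+1) (-1), termE x i := by
      have h := sum_Icc_split (termE x) (a := W) (b := W) (c := -1) (by omega) (by omega)
      rw [h, Finset.Icc_self, Finset.sum_singleton]
    rw [e1, e2, zero_add, e3, e4, add_assoc]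
  -- decomposition of the z side
  have hSz : ∑ i ∈ Finset.Icc (1 - (N:ℤ)) (-1), termE (zdel x b W) i
      = A1 + ∑ i ∈ Finset.Icc (W+1) (-1), termE (zdel x b W) i := by
    have e1 : ∑ i ∈ Finset.Icc (1 - (N:ℤ)) (-1), termE (zdel x b W) i
        = (∑ i ∈ Finset.Icc (1 - (N:ℤ)) b, termE (zdel x b W) i) +
          ∑ i ∈ Finset.Icc (b+1) (-1), termE (zdel x b W) i :=
      sum_Icc_split _ (by omega) (by omega)
    have e2 : ∑ i ∈ Finset.Icc (1 - (N:ℤ)) b, termE (zdel x b W) i = 0 :=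
      Finset.sum_eq_zero fun i hi =>
        termE_zero (zdel_at_le_b (Finset.mem_Icc.mp hi).2)
    have e3 : ∑ i ∈ Finset.Icc (b+1) (-1), termE (zdel x b W) i
        = (∑ i ∈ Finset.Icc (b+1) W, termE (zdel x b W) i) +
          ∑ i ∈ Finset.Icc (W+1) (-1), termE (zdel x b W) i :=
      sum_Icc_split _ (by omega) (by omega)
    have e4 : ∑ i ∈ Finset.Icc (b+1) W, termE (zdel x b W) i = A1 := by
      have h := sum_shift (termE (zdel x b W)) b (W-1)
      rw [show (W - 1 + 1 : ℤ) = W from by ring] at h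
      exact h
    rw [e1, e2, zero_add, e3, e4]
  -- finiteness facts
  have hsum_ne : (∑ i ∈ Finset.Icc (1 - (N:ℤ)) (-1), termE x i) ≠ ⊤ ∧ P0 ≠ ⊤ := by
    have := hfin
    rw [Tval_eq_sum hxD] at this
    exact ENNReal.add_ne_top.mp this
  have hB1_ne : B1 ≠ ⊤ := by
    intro hc
    apply hsum_ne.1
    rw [hSx, hc, top_add, top_add]
  have htermW_ne : termE x W ≠ ⊤ := by
    intro hc
    apply hsum_ne.1
    rw [hSx, hc]
    simp
  have hTail_ne : (∑ i ∈ Finset.Icc (W+1) (-1), termE x i) ≠ ⊤ := by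
    intro hc
    apply hsum_ne.1
    rw [hSx, hc, add_top]
  -- case split on W = -1
  by_cases hWe : W = -1
  · -- W = -1
    subst hWe
    have hIccEmpty : Finset.Icc ((-1:ℤ)+1) (-1) = ∅ := by
      apply Finset.Icc_eq_empty
      omega
    have hDp : D = ENNReal.ofReal p := by rw [hD, if_pos rfl]
    have hTz : Tval (zdel x b (-1)) p = A1 + Mz + 0 := by
      rw [Tval_eq_sum hz_mem, hSz, hIccEmpty, Finset.sum_empty, add_zero]
      have hz0 : zdel x b (-1) 0 = x (-1) + x 0 := by
        have h := zdel_at_merge (x := x) (b := b) (W := -1) hbW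
        rw [show ((-1:ℤ)+1) = 0 from by ring] at h
        exact h
      rw [hz0, add_zero, hMz, hDp]
      norm_num
    have hTx : Tval x p = B1 + Mx + 0 := by
      rw [Tval_eq_sum hxD, hSx, hIccEmpty, Finset.sum_empty, add_zero, add_zero, hMx, hDp]
      have : ((-1:ℤ)+1) = 0 := by ring
      rw [this]
      ring
    have hMx_ne : Mx ≠ ⊤ := by
      rw [hMx, hDp]
      apply ENNReal.add_ne_top.mpr
      refine ⟨htermW_ne, ?_⟩
      apply ne_of_lt
      apply ENNReal.div_lt_top ENNReal.ofReal_ne_top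
      simp only [ne_eq, ENNReal.ofReal_eq_zero, not_le]
      linarith
    have hA1B1 : A1 ≤ B1 := by
      apply Finset.sum_le_sum
      intro j hj
      have hj' := Finset.mem_Icc.mp hj
      have h := zdel_term_le hxD hbW hW (i := j + 1) (by omega) (by omega)
      rw [show (j + 1 - 1 : ℤ) = j from by ring] at h
      exact h
    have hstrict' : A1 < B1 ∨ Mz < Mx := by
      rcases hstrict with ⟨v, hv1, hv2, hv3⟩ | h
      · left
        exact sum_lt_sum_of_lt
          (fun j hj => by
            have hj' := Finset.mem_Icc.mp hj
            have h := zdel_term_le hxD hbW hW (i := j + 1) (by omega) (by omega)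
            rwa [show (j + 1 - 1 : ℤ) = j from by ring] at h)
          (Finset.mem_Icc.mpr ⟨hv1, hv2⟩) hv3 hB1_ne
      · right
        rw [hMz, hMx, hD]
        exact h
    have hlt : Tval (zdel x b (-1)) p < Tval x p := by
      rw [hTz, hTx]
      exact add3_lt hA1B1 (by rw [hMz, hMx, hD] at *; exact hmerge) hstrict' hB1_ne hMx_ne
        (by simp)
    exact absurd (Tval_min_le hmin hz_mem) (not_le_of_gt hlt)
  · -- W ≤ -2
    have hW2 : W ≤ -2 := by
      rcases lt_or_eq_of_le hW with h | h
      · omega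
      · exact absurd h hWe
    have hDm : D = ENNReal.ofReal (mNeg x (W+1)) := by rw [hD, if_neg hWe]
    have hTailz : ∑ i ∈ Finset.Icc (W+1) (-1), termE (zdel x b W) i = Mz + C := by
      have e1 : ∑ i ∈ Finset.Icc (W+1) (-1), termE (zdel x b W) i
          = termE (zdel x b W) (W+1) + ∑ i ∈ Finset.Icc (W+2) (-1), termE (zdel x b W) i := by
        have h := sum_Icc_split (termE (zdel x b W)) (a := W+1) (b := W+1) (c := -1)
          (by omega) (by omega)
        rw [h, Finset.Icc_self, Finset.sum_singleton,
          show (W + 1 + 1 : ℤ) = W + 2 from by ring]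
      have e2 : termE (zdel x b W) (W+1) = Mz := by
        rw [termE, zdel_at_merge hbW, zdel_mNeg_high hbW (by omega) (by omega), hMz, hDm]
      have e3 : ∑ i ∈ Finset.Icc (W+2) (-1), termE (zdel x b W) i = C := by
        rw [hC]
        apply Finset.sum_congr rfl
        intro i hi
        have hi' := Finset.mem_Icc.mp hi
        exact zdel_term_high hbW hi'.1 hi'.2
      rw [e1, e2, e3]
    have hTailx : ∑ i ∈ Finset.Icc (W+1) (-1), termE x i
        = ENNReal.ofReal (x (W+1)) / D + C := by
      have e1 : ∑ i ∈ Finset.Icc (W+1) (-1), termE x i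
          = termE x (W+1) + ∑ i ∈ Finset.Icc (W+2) (-1), termE x i := by
        have h := sum_Icc_split (termE x) (a := W+1) (b := W+1) (c := -1) (by omega) (by omega)
        rw [h, Finset.Icc_self, Finset.sum_singleton,
          show (W + 1 + 1 : ℤ) = W + 2 from by ring]
      rw [e1, hC, termE, hDm]
    have hz0 : zdel x b W 0 = x 0 := zdel_at_high hbW (by omega)
    have hTz : Tval (zdel x b W) p = A1 + Mz + (C + P0) := by
      rw [Tval_eq_sum hz_mem, hSz, hTailz, hz0, hP0]
      ring
    have hTx : Tval x p = B1 + Mx + (C + P0) := by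
      rw [Tval_eq_sum hxD, hSx, hTailx, hMx, hP0]
      ring
    have hC_ne : C ≠ ⊤ := by
      intro hc
      apply hTail_ne
      rw [hTailx, hc, add_top]
    have hterm1_ne : ENNReal.ofReal (x (W+1)) / D ≠ ⊤ := by
      intro hc
      apply hTail_ne
      rw [hTailx, hc, top_add]
    have hMx_ne : Mx ≠ ⊤ := by
      rw [hMx]
      exact ENNReal.add_ne_top.mpr ⟨htermW_ne, hterm1_ne⟩
    have hA1B1 : A1 ≤ B1 := by
      apply Finset.sum_le_sum
      intro j hj
      have hj' := Finset.mem_Icc.mp hj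
      have h := zdel_term_le hxD hbW hW (i := j + 1) (by omega) (by omega)
      rw [show (j + 1 - 1 : ℤ) = j from by ring] at h
      exact h
    have hstrict' : A1 < B1 ∨ Mz < Mx := by
      rcases hstrict with ⟨v, hv1, hv2, hv3⟩ | h
      · left
        exact sum_lt_sum_of_lt
          (fun j hj => by
            have hj' := Finset.mem_Icc.mp hj
            have h := zdel_term_le hxD hbW hW (i := j + 1) (by omega) (by omega)
            rwa [show (j + 1 - 1 : ℤ) = j from by ring] at h)
          (Finset.mem_Icc.mpr ⟨hv1, hv2⟩) hv3 hB1_ne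
      · right
        rw [hMz, hMx, hD]
        exact h
    have hlt : Tval (zdel x b W) p < Tval x p := by
      rw [hTz, hTx]
      refine add3_lt hA1B1 ?_ hstrict' hB1_ne hMx_ne ?_
      · rw [hMz, hMx, hD] at *
        exact hmerge
      · simp [hC_ne, ENNReal.add_ne_top, hsum_ne.2]
    exact absurd (Tval_min_le hmin hz_mem) (not_le_of_gt hlt)

end Aux

namespace Aux

lemma sum_Icc_head {M : Type*} [AddCommMonoid M] (f : ℤ → M) {a c : ℤ} (h : a ≤ c) :
    ∑ i ∈ Finset.Icc a c, f i = f a + ∑ i ∈ Finset.Icc (a+1) c, f i := by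
  have h' := sum_Icc_split f (a := a) (b := a) (c := c) (by omega) h
  rw [h', Finset.Icc_self, Finset.sum_singleton]

lemma zdel_strict_at {x : ℤ → ℝ} {b W : ℤ} (hbW : b ≤ W) (hW : W ≤ -1)
    {v : ℤ} (hv1 : b ≤ v) (hv2 : v ≤ W - 1) (hvpos : 0 < x v) (hMv : 0 < mNeg x v)
    (hsmall : ∀ r : ℤ, 1 ≤ r → v + r ≤ W → avgw x v r < mNeg x v) :
    termE (zdel x b W) (v+1) < termE x v := by
  have hv_le : v ≤ -1 := by omega
  obtain ⟨r0, hr01, hr02, hr0eq⟩ := mNeg_exists x hv_le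
  have hr0big : W + 1 ≤ v + r0 := by
    by_contra hcon
    push_neg at hcon
    have := hsmall r0 hr01 (by omega)
    rw [← hr0eq] at this
    exact lt_irrefl _ this
  have hr0ge2 : 2 ≤ r0 := by omega
  have hr0R : (0:ℝ) < ((r0:ℤ):ℝ) := by exact_mod_cast (by omega : (0:ℤ) < r0)
  have hS : ∑ j ∈ Finset.Icc (v+1) (v+r0), x j = mNeg x v * (r0:ℝ) := by
    rw [hr0eq]
    unfold avgw
    field_simp
  -- the counterpart window in the deleted configuration
  have hcross := zdel_sum_cross (x := x) (b := b) (W := W) hbW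
    (by omega : b ≤ v + 1) (by omega : v + 1 ≤ W) (by omega : W + 1 ≤ v + r0)
  have hzavg : avgw (zdel x b W) (v+1) (r0 - 1) = mNeg x v * (r0:ℝ) / (((r0:ℤ):ℝ) - 1) := by
    unfold avgw
    rw [show (v + 1 + (r0 - 1) : ℤ) = v + r0 from by ring,
      show (v + 1 + 1 : ℤ) = (v + 1) + 1 from by ring, hcross, hS]
    congr 1
    push_cast
    ring
  have hr0m1 : (0:ℝ) < ((r0:ℤ):ℝ) - 1 := by
    have : (1:ℝ) < ((r0:ℤ):ℝ) := by exact_mod_cast (by omega : (1:ℤ) < r0)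
    linarith
  have hgt : mNeg x v < avgw (zdel x b W) (v+1) (r0 - 1) := by
    rw [hzavg]
    rw [lt_div_iff₀ hr0m1]
    nlinarith [hMv]
  have hmz : mNeg x v < mNeg (zdel x b W) (v+1) :=
    lt_of_lt_of_le hgt (le_mNeg _ (by omega) (by omega) (by omega))
  have hmzpos : 0 < mNeg (zdel x b W) (v+1) := lt_trans hMv hmz
  have hzv : zdel x b W (v+1) = x v := by
    rw [zdel_at_mid (by omega) (by omega)]
    congr 1
    ring
  rw [termE, termE, hzv, ← ENNReal.ofReal_div_of_pos hmzpos, ← ENNReal.ofReal_div_of_pos hMv,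
    ENNReal.ofReal_lt_ofReal_iff (by positivity)]
  exact div_lt_div_of_pos_left hvpos hMv hmz

lemma mNeg_split_bound {x : ℤ → ℝ} {w : ℤ} (hw : w ≤ -2) {B : ℝ}
    (hB1 : x (w+1) ≤ B) (hB2 : ∀ s : ℤ, 1 ≤ s → s ≤ -(w+1) → avgw x (w+1) s ≤ B) :
    mNeg x w ≤ B := by
  apply mNeg_le x (by omega)
  intro r h1 h2
  rcases eq_or_lt_of_le h1 with h | h
  · rw [← h]
    unfold avgw
    rw [show (w + 1 : ℤ) = w + 1 from rfl, Finset.Icc_self, Finset.sum_singleton]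
    simpa using hB1
  · have hr2 : 2 ≤ r := by omega
    have hhead : ∑ j ∈ Finset.Icc (w+1) (w+r), x j
        = x (w+1) + ∑ j ∈ Finset.Icc (w+2) (w+r), x j := by
      rw [sum_Icc_head x (by omega : w + 1 ≤ w + r), show (w+1+1 : ℤ) = w+2 from by ring]
    have havg : ∑ j ∈ Finset.Icc (w+2) (w+r), x j = avgw x (w+1) (r-1) * (((r:ℤ):ℝ) - 1) := by
      unfold avgw
      rw [show (w + 1 + 1 : ℤ) = w + 2 from by ring, show (w + 1 + (r-1) : ℤ) = w + r from by ring]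
      have hc : (((r - 1 : ℤ)):ℝ) = ((r:ℤ):ℝ) - 1 := by push_cast; ring
      rw [hc]
      have hne : ((r:ℤ):ℝ) - 1 ≠ 0 := by
        have : (2:ℝ) ≤ ((r:ℤ):ℝ) := by exact_mod_cast hr2
        linarith
      field_simp
    have hle : avgw x (w+1) (r-1) ≤ B := hB2 (r-1) (by omega) (by omega)
    unfold avgw
    rw [hhead, havg]
    have hrR : (0:ℝ) < ((r:ℤ):ℝ) := by exact_mod_cast (by omega : (0:ℤ) < r)
    have hr1R : (0:ℝ) ≤ ((r:ℤ):ℝ) - 1 := by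
      have : (1:ℝ) ≤ ((r:ℤ):ℝ) := by exact_mod_cast h1
      linarith
    rw [div_le_iff₀ hrR]
    have := mul_le_mul_of_nonneg_right hle hr1R
    nlinarith

lemma mNeg_prev_lt {x : ℤ → ℝ} (hnn : ∀ i, 0 ≤ x i) {w : ℤ} (hw : w ≤ -1)
    (hasc : x w < x (w+1))
    (hMp : ∀ s : ℤ, 1 ≤ s → s ≤ -(w+1) → avgw x (w+1) s ≤ x (w+1)) :
    mNeg x (w-1) < x (w+1) := by
  have hb : ∀ r : ℤ, 1 ≤ r → r ≤ -(w-1) → avgw x (w-1) r < x (w+1) := by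
    intro r h1 h2
    rcases eq_or_lt_of_le h1 with h | h
    · rw [← h]
      unfold avgw
      rw [show (w - 1 + 1 : ℤ) = w from by ring, Finset.Icc_self, Finset.sum_singleton]
      simpa using hasc
    · have hr2 : 2 ≤ r := by omega
      have hsum : ∑ j ∈ Finset.Icc w (w-1+r), x j
          = x w + (x (w+1) + ∑ j ∈ Finset.Icc (w+2) (w-1+r), x j) := by
        rw [sum_Icc_head x (by omega : w ≤ w - 1 + r),
          sum_Icc_head x (by omega : w + 1 ≤ w - 1 + r),
          show (w+1+1 : ℤ) = w+2 from by ring]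
      have htail : ∑ j ∈ Finset.Icc (w+2) (w-1+r), x j ≤ (((r:ℤ):ℝ) - 2) * x (w+1) := by
        rcases eq_or_lt_of_le hr2 with h2' | h2'
        · rw [← h2']
          have : Finset.Icc (w+2) (w-1+2) = ∅ := Finset.Icc_eq_empty (by omega)
          rw [this, Finset.sum_empty]
          push_cast
          norm_num
        · have hr3 : 3 ≤ r := by omega
          have havg : ∑ j ∈ Finset.Icc (w+2) (w-1+r), x j
              = avgw x (w+1) (r-2) * (((r:ℤ):ℝ) - 2) := by
            unfold avgw
            rw [show (w + 1 + 1 : ℤ) = w + 2 from by ring,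
              show (w + 1 + (r-2) : ℤ) = w - 1 + r from by ring]
            have : (((r - 2 : ℤ)):ℝ) = ((r:ℤ):ℝ) - 2 := by push_cast; ring
            rw [this]
            have hpos : (0:ℝ) < ((r:ℤ):ℝ) - 2 := by
              have : (2:ℝ) < ((r:ℤ):ℝ) := by exact_mod_cast h2'
              linarith
            field_simp
          rw [havg]
          have hle := hMp (r-2) (by omega) (by omega)
          have hpos : (0:ℝ) ≤ ((r:ℤ):ℝ) - 2 := by
            have : (2:ℝ) ≤ ((r:ℤ):ℝ) := by exact_mod_cast hr2
            linarith
          nlinarith [mul_le_mul_of_nonneg_right hle hpos]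
      unfold avgw
      rw [show (w - 1 + 1 : ℤ) = w from by ring, hsum]
      have hrR : (0:ℝ) < ((r:ℤ):ℝ) := by exact_mod_cast (by omega : (0:ℤ) < r)
      rw [div_lt_iff₀ hrR]
      nlinarith
  obtain ⟨r, h1, h2, h3⟩ := mNeg_exists x (by omega : w - 1 ≤ -1)
  rw [h3]
  exact hb r h1 h2

end Aux

namespace Aux

lemma add_lt_add_right' {a b t : ℝ≥0∞} (h : a < b) (ht : t ≠ ⊤) : a + t < b + t := by
  rw [add_comm a t, add_comm b t]
  exact ENNReal.add_lt_add_left ht h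

lemma partA (N : ℕ) (hN : 1 ≤ N) (p : ℝ) (hp : 0 < p) (x : ℤ → ℝ) (hx : x ∈ Delta N)
    (hmin : Tval x p = Tstar N p) (hfin : Tval x p ≠ ⊤)
    (b : ℤ) (hb1 : 1 - (N:ℤ) ≤ b) (hb2 : b ≤ -1) (hbpos : 0 < x b)
    (hbmin : ∀ i, i < b → x i = 0) (hx0p : p ≤ x 0)
    (w : ℤ) (hw1 : b + 1 ≤ w) (hw2 : w ≤ -1) (hasc : x w < x (w+1))
    (hwmin : ∀ i, b + 1 ≤ i → i < w → x (i+1) ≤ x i) : False := by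
  have hnn := hx.1
  have hc : 0 < x (w+1) := lt_of_le_of_lt (hnn w) hasc
  have hx0 : 0 < x 0 := lt_of_lt_of_le hp hx0p
  set Mp : ℝ := if w = -1 then p else mNeg x (w+1) with hMpdef
  have hMp_avg : ∀ s : ℤ, 1 ≤ s → s ≤ -(w+1) → avgw x (w+1) s ≤ Mp := by
    intro s h1 h2
    rw [hMpdef]
    by_cases h : w = -1
    · exfalso; omega
    · rw [if_neg h]
      exact le_mNeg x (by omega) h1 h2
  have hMw_ge : x (w+1) ≤ mNeg x w := by
    have h := le_mNeg x hw2 (le_refl 1) (by omega : (1:ℤ) ≤ -w)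
    unfold avgw at h
    rw [Finset.Icc_self, Finset.sum_singleton] at h
    simpa using h
  by_cases hxw0 : x w = 0
  · -- CASE 1 : x w = 0
    set S := (Finset.Icc b (w-1)).filter (fun j => x j ≠ 0) with hSdef
    have hSne : S.Nonempty :=
      ⟨b, Finset.mem_filter.mpr ⟨Finset.mem_Icc.mpr ⟨le_rfl, by omega⟩, ne_of_gt hbpos⟩⟩
    set v := S.max' hSne with hvdef
    have hvS := S.max'_mem hSne
    have hv_icc := (Finset.mem_filter.mp hvS).1
    have hv1 : b ≤ v := (Finset.mem_Icc.mp hv_icc).1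
    have hv2 : v ≤ w - 1 := (Finset.mem_Icc.mp hv_icc).2
    have hvpos : 0 < x v := lt_of_le_of_ne (hnn v) (Ne.symm (Finset.mem_filter.mp hvS).2)
    have hvmax : ∀ j, v < j → j ≤ w - 1 → x j = 0 := by
      intro j hj1 hj2
      by_contra hne
      have hjS : j ∈ S := Finset.mem_filter.mpr ⟨Finset.mem_Icc.mpr ⟨by omega, hj2⟩, hne⟩
      have := S.le_max' j hjS
      omega
    have hMv : 0 < mNeg x v :=
      mNeg_pos hx hfin (Finset.mem_Icc.mpr ⟨by omega, by omega⟩) hvpos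
    have hsmall : ∀ r : ℤ, 1 ≤ r → v + r ≤ w → avgw x v r < mNeg x v := by
      intro r h1 h2
      have hz : ∀ j ∈ Finset.Icc (v+1) (v+r), x j = 0 := by
        intro j hj
        have hj' := Finset.mem_Icc.mp hj
        rcases eq_or_lt_of_le (show j ≤ w by omega) with h | h
        · rw [h]; exact hxw0
        · exact hvmax j (by omega) (by omega)
      have hz0 : avgw x v r = 0 := by
        unfold avgw
        rw [Finset.sum_eq_zero hz, zero_div]
      rw [hz0]
      exact hMv
    have hstrict := zdel_strict_at (x := x) (b := b) (W := w) (by omega) hw2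
      hv1 hv2 hvpos hMv hsmall
    apply zdel_contra N hN p hp x hx hmin hfin b hb1 hbmin w (by omega) hw2 ?_
      (Or.inl ⟨v, hv1, hv2, hstrict⟩)
    rw [hxw0, zero_add, termE_zero hxw0, zero_add]
  · have hxwpos : 0 < x w := lt_of_le_of_ne (hnn w) (Ne.symm hxw0)
    have hxw1pos : 0 < x (w-1) := by
      rcases eq_or_lt_of_le hw1 with h | h
      · rw [show (w - 1 : ℤ) = b from by omega]
        exact hbpos
      · have h' := hwmin (w-1) (by omega) (by omega)
        rw [show (w - 1 + 1 : ℤ) = w from by ring] at h'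
        linarith
    rcases le_or_gt (mNeg x w) Mp with hMle | hMlt
    · -- CASE 2 : x w > 0 and mNeg x w ≤ Mp
      have hMv : 0 < mNeg x (w-1) :=
        mNeg_pos hx hfin (Finset.mem_Icc.mpr ⟨by omega, by omega⟩) hxw1pos
      have havg2 : avgw x (w-1) 2 = (x w + x (w+1)) / 2 := by
        unfold avgw
        rw [show (w - 1 + 1 : ℤ) = w from by ring, show (w - 1 + 2 : ℤ) = w + 1 from by ring,
          sum_Icc_head x (by omega : w ≤ w + 1), Finset.Icc_self, Finset.sum_singleton]
        norm_num
      have hM2 : (x w + x (w+1)) / 2 ≤ mNeg x (w-1) := by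
        rw [← havg2]
        exact le_mNeg x (by omega) (by omega) (by omega)
      have hsmall : ∀ r : ℤ, 1 ≤ r → (w-1) + r ≤ w → avgw x (w-1) r < mNeg x (w-1) := by
        intro r h1 h2
        have hr1 : r = 1 := by omega
        subst hr1
        have : avgw x (w-1) 1 = x w := by
          unfold avgw
          rw [show (w - 1 + 1 : ℤ) = w from by ring, Finset.Icc_self, Finset.sum_singleton]
          simp
        rw [this]
        have : x w < (x w + x (w+1)) / 2 := by linarith
        linarith
      have hstrict := zdel_strict_at (x := x) (b := b) (W := w) (by omega) hw2
        (by omega : b ≤ w - 1) (le_refl (w-1)) hxw1pos hMv hsmall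
      apply zdel_contra N hN p hp x hx hmin hfin b hb1 hbmin w (by omega) hw2 ?_
        (Or.inl ⟨w - 1, by omega, le_refl _, hstrict⟩)
      have hDeq : (if w = -1 then ENNReal.ofReal p else ENNReal.ofReal (mNeg x (w+1)))
          = ENNReal.ofReal Mp := by
        rw [hMpdef]
        by_cases h : w = -1
        · rw [if_pos h, if_pos h]
        · rw [if_neg h, if_neg h]
      rw [hDeq, ENNReal.ofReal_add (hnn w) (hnn (w+1)), ENNReal.add_div]
      apply add_le_add ?_ le_rfl
      rw [termE]
      exact ENNReal.div_le_div_left (ENNReal.ofReal_le_ofReal hMle) _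
    · -- CASE 3 : x w > 0 and Mp < mNeg x w
      have hMpc : Mp < x (w+1) ∧ mNeg x w = x (w+1) := by
        rcases le_or_gt (x (w+1)) Mp with h | h
        · exfalso
          have hle : mNeg x w ≤ Mp := by
            by_cases hwe : w = -1
            · subst hwe
              apply mNeg_le x (by omega)
              intro r h1 h2
              have : r = 1 := by omega
              subst this
              unfold avgw
              rw [Finset.Icc_self, Finset.sum_singleton]
              simpa using h
            · exact mNeg_split_bound (by omega) h hMp_avg
          exact absurd hle (not_le_of_gt hMlt)
        · refine ⟨h, le_antisymm ?_ hMw_ge⟩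
          by_cases hwe : w = -1
          · subst hwe
            apply mNeg_le x (by omega)
            intro r h1 h2
            have : r = 1 := by omega
            subst this
            unfold avgw
            rw [Finset.Icc_self, Finset.sum_singleton]
            simp
          · exact mNeg_split_bound (by omega) le_rfl
              (fun s h1 h2 => le_trans (hMp_avg s h1 h2) h.le)
      have hprev : mNeg x (w-1) < x (w+1) :=
        mNeg_prev_lt hnn hw2 hasc (fun s h1 h2 => le_trans (hMp_avg s h1 h2) hMpc.1.le)
      have hMv1 : 0 < mNeg x (w-1) :=
        mNeg_pos hx hfin (Finset.mem_Icc.mpr ⟨by omega, by omega⟩) hxw1pos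
      have hD' : (if w - 1 = -1 then ENNReal.ofReal p else ENNReal.ofReal (mNeg x (w-1+1)))
          = ENNReal.ofReal (x (w+1)) := by
        rw [if_neg (by omega : ¬ (w - 1 = -1)), show (w - 1 + 1 : ℤ) = w from by ring, hMpc.2]
      have hcm : 0 < mNeg x w := by
        rw [hMpc.2]; exact hc
      have hmergeS : ENNReal.ofReal (x (w-1) + x (w-1+1)) /
            (if w - 1 = -1 then ENNReal.ofReal p else ENNReal.ofReal (mNeg x (w-1+1)))
          < termE x (w-1) + ENNReal.ofReal (x (w-1+1)) /
            (if w - 1 = -1 then ENNReal.ofReal p else ENNReal.ofReal (mNeg x (w-1+1))) := by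
        rw [hD', show (w - 1 + 1 : ℤ) = w from by ring,
          ENNReal.ofReal_add (hnn (w-1)) (hnn w), ENNReal.add_div]
        apply add_lt_add_right'
        · rw [termE, ← ENNReal.ofReal_div_of_pos hc, ← ENNReal.ofReal_div_of_pos hMv1,
            ENNReal.ofReal_lt_ofReal_iff (by positivity)]
          exact div_lt_div_of_pos_left hxw1pos hMv1 hprev
        · apply ne_of_lt
          apply ENNReal.div_lt_top ENNReal.ofReal_ne_top
          simp only [ne_eq, ENNReal.ofReal_eq_zero, not_le]
          linarith
      exact zdel_contra N hN p hp x hx hmin hfin b hb1 hbmin (w-1) (by omega) (by omega)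
        (le_of_lt hmergeS) (Or.inr hmergeS)

end Aux

/-- Structure of minimizers: if `x ∈ Δ_N` is an `(N,p)`-minimizer and
`x_{k−1} ≠ 0` for some `k ∈ [2−N : 0]`, then `x_k ≥ x_{k+1} ≥ … ≥ x_0 ≥ p`. -/
theorem minimizer_monotone (N : ℕ) (hN : 1 ≤ N) (p : ℝ) (hp : 0 < p)
    (x : ℤ → ℝ) (hx : x ∈ Delta N) (hmin : Tval x p = Tstar N p)
    (k : ℤ) (hk1 : 2 - (N : ℤ) ≤ k) (hk2 : k ≤ 0) (hk : x (k - 1) ≠ 0) :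
    (∀ i : ℤ, k ≤ i → i ≤ -1 → x (i + 1) ≤ x i) ∧ p ≤ x 0 := by
  classical
  have hfin : Tval x p ≠ ⊤ := Aux.Tstar_lt_top N hN hp hx hmin
  set S := (Finset.Icc (1 - (N:ℤ)) 0).filter (fun j => x j ≠ 0) with hS
  have hkS : k - 1 ∈ S := Finset.mem_filter.mpr ⟨Finset.mem_Icc.mpr ⟨by omega, by omega⟩, hk⟩
  have hSne : S.Nonempty := ⟨k - 1, hkS⟩
  set b := S.min' hSne with hbdef
  have hbS := S.min'_mem hSne
  have hb_icc := (Finset.mem_filter.mp hbS).1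
  have hb1 : 1 - (N:ℤ) ≤ b := (Finset.mem_Icc.mp hb_icc).1
  have hbne : x b ≠ 0 := (Finset.mem_filter.mp hbS).2
  have hble : b ≤ k - 1 := S.min'_le _ hkS
  have hb2 : b ≤ -1 := by omega
  have hbmin : ∀ i, i < b → x i = 0 := by
    intro i hi
    by_contra hne
    rcases lt_or_ge i (1 - (N:ℤ)) with h | h
    · exact hne (hx.2.1 i (by omega))
    · rcases le_or_gt i 0 with h2 | h2
      · have hiS : i ∈ S := Finset.mem_filter.mpr ⟨Finset.mem_Icc.mpr ⟨h, h2⟩, hne⟩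
        have := S.min'_le i hiS
        omega
      · exact hne (hx.2.2.1 i h2)
  have hbpos : 0 < x b := lt_of_le_of_ne (hx.1 b) (Ne.symm hbne)
  have hx0p : p ≤ x 0 := Aux.partB N p hp x hx hmin hfin b hb1 hb2 hbne hbmin
  refine ⟨?_, hx0p⟩
  intro i hki hi1
  by_contra hcon
  push_neg at hcon
  set A := (Finset.Icc (b+1) (-1)).filter (fun j => x j < x (j+1)) with hA
  have hiA : i ∈ A := Finset.mem_filter.mpr ⟨Finset.mem_Icc.mpr ⟨by omega, hi1⟩, hcon⟩
  have hAne : A.Nonempty := ⟨i, hiA⟩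
  set w := A.min' hAne with hw
  have hwA := A.min'_mem hAne
  have hw_icc := (Finset.mem_filter.mp hwA).1
  have hw1 : b + 1 ≤ w := (Finset.mem_Icc.mp hw_icc).1
  have hw2 : w ≤ -1 := (Finset.mem_Icc.mp hw_icc).2
  have hasc : x w < x (w+1) := (Finset.mem_filter.mp hwA).2
  have hwmin : ∀ j, b + 1 ≤ j → j < w → x (j+1) ≤ x j := by
    intro j hj1 hj2
    by_contra hne
    push_neg at hne
    have hjA : j ∈ A := Finset.mem_filter.mpr ⟨Finset.mem_Icc.mpr ⟨hj1, by omega⟩, hne⟩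
    have := A.min'_le j hjA
    omega
  exact Aux.partA N hN p hp x hx hmin hfin b hb1 hb2 hbpos hbmin hx0p w hw1 hw2 hasc hwmin
end

section
/- For every p > 0, the nonincreasing sequence (T_N*(p))_{N≥1} stabilizes no later than at N = ⌈1/p⌉: for every integer N ≥ ⌈1/p⌉ one has T^inf(p) = T_N*(p). Moreover, any (N,p)-minimizer x satisfies x_i = 0 for all i < −1/p. -/
open Finset Filter Topology
open scoped ENNReal

namespace TSaux

lemma sum_split {M : Type*} [AddCommMonoid M] (f : ℤ → M) {a b m : ℤ} (h1 : a ≤ m + 1) (h2 : m ≤ b) :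
    ∑ i ∈ Icc a b, f i = (∑ i ∈ Icc a m, f i) + ∑ i ∈ Icc (m+1) b, f i := by
  rw [← Finset.sum_union]
  · congr 1
    ext j
    simp only [Finset.mem_union, Finset.mem_Icc]
    omega
  · rw [Finset.disjoint_left]
    intro j hj hj'
    simp only [Finset.mem_Icc] at hj hj'
    omega

lemma sum_shift_idx {M : Type*} [AddCommMonoid M] (f : ℤ → M) (a b : ℤ) :
    ∑ j ∈ Icc a b, f (j - 1) = ∑ j ∈ Icc (a-1) (b-1), f j := by
  have h : Icc a b = (Icc (a-1) (b-1)).map (addRightEmbedding 1) := by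
    rw [map_add_right_Icc]; congr 1 <;> ring
  rw [h, Finset.sum_map]
  simp [addRightEmbedding]

variable {x y : ℤ → ℝ} {i : ℤ} {p : ℝ}

lemma mNeg_set_eq (x : ℤ → ℝ) (i : ℤ) :
    {a : ℝ | ∃ r : ℤ, 1 ≤ r ∧ r ≤ -i ∧
      a = (∑ j ∈ Finset.Icc (i + 1) (i + r), x j) / (r : ℝ)} =
    (fun r : ℤ => (∑ j ∈ Finset.Icc (i + 1) (i + r), x j) / (r : ℝ)) '' (Set.Icc 1 (-i)) := by
  ext a
  constructor
  · rintro ⟨r, h1, h2, rfl⟩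
    exact ⟨r, ⟨h1, h2⟩, rfl⟩
  · rintro ⟨r, ⟨h1, h2⟩, rfl⟩
    exact ⟨r, h1, h2, rfl⟩

lemma mNeg_finite (x : ℤ → ℝ) (i : ℤ) :
    {a : ℝ | ∃ r : ℤ, 1 ≤ r ∧ r ≤ -i ∧
      a = (∑ j ∈ Finset.Icc (i + 1) (i + r), x j) / (r : ℝ)}.Finite := by
  rw [mNeg_set_eq]
  exact (Set.finite_Icc _ _).image _

lemma mNeg_nonempty (hi : i ≤ -1) :
    {a : ℝ | ∃ r : ℤ, 1 ≤ r ∧ r ≤ -i ∧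
      a = (∑ j ∈ Finset.Icc (i + 1) (i + r), x j) / (r : ℝ)}.Nonempty :=
  ⟨_, 1, le_refl _, by omega, rfl⟩

lemma mNeg_exists (hi : i ≤ -1) :
    ∃ r : ℤ, 1 ≤ r ∧ r ≤ -i ∧ mNeg x i = (∑ j ∈ Finset.Icc (i + 1) (i + r), x j) / (r : ℝ) :=
  (mNeg_nonempty hi).csSup_mem (mNeg_finite x i)

lemma le_mNeg {r : ℤ} (h1 : 1 ≤ r) (h2 : r ≤ -i) :
    (∑ j ∈ Finset.Icc (i + 1) (i + r), x j) / (r : ℝ) ≤ mNeg x i :=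
  le_csSup (Set.Finite.bddAbove (mNeg_finite x i)) ⟨r, h1, h2, rfl⟩

lemma mNeg_nonneg (hnn : ∀ j, 0 ≤ x j) (hi : i ≤ -1) : 0 ≤ mNeg x i := by
  have h := le_mNeg (x := x) (i := i) (r := 1) le_rfl (by omega)
  refine le_trans ?_ h
  apply div_nonneg _ (by norm_num)
  exact Finset.sum_nonneg fun j _ => hnn j

lemma mNeg_congr (h : ∀ j, i + 1 ≤ j → j ≤ 0 → x j = y j) (hi : i ≤ -1) :
    mNeg x i = mNeg y i := by
  unfold mNeg
  congr 1
  ext a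
  constructor <;> rintro ⟨r, h1, h2, rfl⟩ <;> refine ⟨r, h1, h2, ?_⟩ <;>
    · congr 1
      apply Finset.sum_congr rfl
      intro j hj
      simp only [Finset.mem_Icc] at hj
      first
      | exact (h j hj.1 (by omega))
      | exact (h j hj.1 (by omega)).symm

/-- Effective denominator: `p` at site `0`, else `mNeg`. -/
noncomputable def dm (p : ℝ) (x : ℤ → ℝ) (i : ℤ) : ℝ := if i = 0 then p else mNeg x i

/-- Effective term of `T`. -/
noncomputable def tm (p : ℝ) (x : ℤ → ℝ) (i : ℤ) : ℝ≥0∞ :=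
  ENNReal.ofReal (x i) / ENNReal.ofReal (dm p x i)

lemma Tval_eq_sum {L : ℤ} (hL : L ≤ 0) (h0 : ∀ i, i < L → x i = 0) :
    Tval x p = ∑ i ∈ Icc L 0, tm p x i := by
  have hsub : (∑' i : {z : ℤ // z ≤ -1}, ENNReal.ofReal (x i) / ENNReal.ofReal (mNeg x i))
      = ∑' i : ℤ, ({z : ℤ | z ≤ -1}).indicator
          (fun i => ENNReal.ofReal (x i) / ENNReal.ofReal (mNeg x i)) i :=
    _root_.tsum_subtype {z : ℤ | z ≤ -1} (fun i => ENNReal.ofReal (x i) / ENNReal.ofReal (mNeg x i))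
  have hfin : (∑' i : ℤ, ({z : ℤ | z ≤ -1}).indicator
      (fun i => ENNReal.ofReal (x i) / ENNReal.ofReal (mNeg x i)) i)
      = ∑ i ∈ Icc L (-1), ({z : ℤ | z ≤ -1}).indicator
          (fun i => ENNReal.ofReal (x i) / ENNReal.ofReal (mNeg x i)) i := by
    apply tsum_eq_sum
    intro b hb
    simp only [Finset.mem_Icc, not_and, not_le] at hb
    by_cases h1 : b ≤ -1
    · rw [Set.indicator_of_mem (by exact h1)]
      have hbL : b < L := by
        by_contra hcon
        push_neg at hcon
        have := hb hcon
        omega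
      have : x b = 0 := h0 b hbL
      simp [this]
    · exact Set.indicator_of_notMem (by exact h1) _
  have hcongr : (∑ i ∈ Icc L (-1), ({z : ℤ | z ≤ -1}).indicator
      (fun i => ENNReal.ofReal (x i) / ENNReal.ofReal (mNeg x i)) i)
      = ∑ i ∈ Icc L (-1), tm p x i := by
    apply Finset.sum_congr rfl
    intro i hi
    simp only [Finset.mem_Icc] at hi
    rw [Set.indicator_of_mem (by exact hi.2)]
    unfold tm dm
    rw [if_neg (by omega)]
  have hsplit : ∑ i ∈ Icc L 0, tm p x i
      = (∑ i ∈ Icc L (-1), tm p x i) + ∑ i ∈ Icc (0:ℤ) 0, tm p x i := by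
    have h := sum_split (tm p x) (a := L) (m := -1) (b := 0) (by omega) (by omega)
    rw [show (-1:ℤ)+1 = 0 by ring] at h
    exact h
  rw [hsplit]
  unfold Tval
  rw [hsub, hfin, hcongr]
  congr 1
  rw [Finset.Icc_self, Finset.sum_singleton]
  unfold tm dm
  rw [if_pos rfl]

/-- block shift: everything at positions `≤ c` moves one step right. -/
noncomputable def shiftF (x : ℤ → ℝ) (c : ℤ) : ℤ → ℝ :=
  fun i => if i ≤ c then x (i-1) else if i = c + 1 then x c + x (c+1) else x i

lemma shiftF_low {c i : ℤ} (h : i ≤ c) : shiftF x c i = x (i-1) := if_pos h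

lemma shiftF_mid {c : ℤ} : shiftF x c (c+1) = x c + x (c+1) := by
  unfold shiftF
  rw [if_neg (by omega), if_pos rfl]

lemma shiftF_high {c i : ℤ} (h : c + 2 ≤ i) : shiftF x c i = x i := by
  unfold shiftF
  rw [if_neg (by omega), if_neg (by omega)]

lemma mNeg_shiftF_ge (hnn : ∀ j, 0 ≤ x j) {c : ℤ} (hc : c ≤ -1) (hi : i ≤ c) :
    mNeg x (i-1) ≤ mNeg (shiftF x c) i := by
  obtain ⟨r, h1, h2, heq⟩ := mNeg_exists (x := x) (i := i - 1) (by omega)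
  have hri : Finset.Icc (i - 1 + 1) (i - 1 + r) = Finset.Icc i (i + r - 1) := by
    congr 1 <;> ring
  set S : ℝ := ∑ j ∈ Finset.Icc i (i + r - 1), x j with hS
  have hS0 : 0 ≤ S := Finset.sum_nonneg fun j _ => hnn j
  rw [hri] at heq
  by_cases hb : i + r - 1 ≤ c
  · -- window stays inside the shifted block
    have hr2 : r ≤ -i := by omega
    have hle : S ≤ ∑ j ∈ Finset.Icc (i+1) (i+r), shiftF x c j := by
      have hidx : ∑ j ∈ Finset.Icc (i+1) (i+r), x (j - 1) = S := by
        rw [sum_shift_idx x (i+1) (i+r)]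
        have e : Finset.Icc (i+1-1) (i+r-1) = Finset.Icc i (i+r-1) := by congr 1; ring
        rw [e]
      rw [← hidx]
      apply Finset.sum_le_sum
      intro j hj
      simp only [Finset.mem_Icc] at hj
      rcases le_or_gt j c with h | h
      · rw [shiftF_low h]
      · have hj1 : j = c + 1 := by omega
        subst hj1
        rw [shiftF_mid]
        have := hnn (c + 1)
        have h' : (c + 1) - 1 = c := by ring
        rw [h']
        linarith
    calc mNeg x (i-1) = S / r := heq
      _ ≤ (∑ j ∈ Finset.Icc (i+1) (i+r), shiftF x c j) / r := by
          have hr0 : (0:ℝ) < (r:ℝ) := by exact_mod_cast h1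
          exact (div_le_div_iff_of_pos_right hr0).mpr hle
      _ ≤ mNeg (shiftF x c) i := le_mNeg h1 hr2
  · -- window crosses the boundary: use window of length r - 1
    push_neg at hb
    have hr2 : 2 ≤ r := by omega
    have hwin : ∑ j ∈ Finset.Icc (i+1) (i + (r-1)), shiftF x c j = S := by
      have hb' : c + 1 ≤ i + r - 1 := by omega
      have e1 : ∑ j ∈ Finset.Icc (i+1) (i + (r-1)), shiftF x c j
          = (∑ j ∈ Finset.Icc (i+1) c, shiftF x c j)
            + ∑ j ∈ Finset.Icc (c+1) (i + (r-1)), shiftF x c j :=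
        sum_split _ (by omega) (by omega)
      have e2 : ∑ j ∈ Finset.Icc (c+1) (i + (r-1)), shiftF x c j
          = (∑ j ∈ Finset.Icc (c+1) (c+1), shiftF x c j)
            + ∑ j ∈ Finset.Icc (c+2) (i + (r-1)), shiftF x c j := by
        have h := sum_split (shiftF x c) (a := c+1) (m := c+1) (b := i + (r-1)) (by omega) (by omega)
        rw [show c+1+1 = c+2 by ring] at h
        exact h
      have e3 : ∑ j ∈ Finset.Icc (i+1) c, shiftF x c j = ∑ j ∈ Finset.Icc i (c-1), x j := by
        rw [Finset.sum_congr rfl (fun j hj => shiftF_low (Finset.mem_Icc.mp hj).2)]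
        rw [sum_shift_idx]
        congr 1
        ring
      have e4 : ∑ j ∈ Finset.Icc (c+1) (c+1), shiftF x c j = x c + x (c+1) := by
        rw [Finset.Icc_self, Finset.sum_singleton, shiftF_mid]
      have e5 : ∑ j ∈ Finset.Icc (c+2) (i + (r-1)), shiftF x c j
          = ∑ j ∈ Finset.Icc (c+2) (i + (r-1)), x j :=
        Finset.sum_congr rfl (fun j hj => shiftF_high (Finset.mem_Icc.mp hj).1)
      have eS : S = (∑ j ∈ Finset.Icc i (c-1), x j) + (x c + x (c+1))
          + ∑ j ∈ Finset.Icc (c+2) (i + (r-1)), x j := by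
        have f1 : S = (∑ j ∈ Finset.Icc i c, x j) + ∑ j ∈ Finset.Icc (c+1) (i + r - 1), x j :=
          sum_split _ (by omega) (by omega)
        have f2 : ∑ j ∈ Finset.Icc i c, x j = (∑ j ∈ Finset.Icc i (c-1), x j) + x c := by
          have h := sum_split x (a := i) (m := c - 1) (b := c) (by omega) (by omega)
          rw [show c-1+1 = c by ring] at h
          rw [h, Finset.Icc_self, Finset.sum_singleton]
        have f3 : ∑ j ∈ Finset.Icc (c+1) (i + r - 1), x j
            = x (c+1) + ∑ j ∈ Finset.Icc (c+2) (i + r - 1), x j := by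
          have h := sum_split x (a := c+1) (m := c+1) (b := i + r - 1) (by omega) (by omega)
          rw [show c+1+1 = c+2 by ring] at h
          rw [h, Finset.Icc_self, Finset.sum_singleton]
        have hrw : i + (r - 1) = i + r - 1 := by ring
        rw [hrw, f1, f2, f3]
        ring
      have hrw : i + (r - 1) = i + r - 1 := by ring
      rw [e1, e2, e3, e4, e5, eS, hrw]
      ring
    have hq1 : (1:ℤ) ≤ r - 1 := by omega
    have hq2 : r - 1 ≤ -i := by omega
    have hcast : (0:ℝ) < ((r : ℝ) - 1) := by
      have : (2:ℝ) ≤ (r:ℝ) := by exact_mod_cast hr2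
      linarith
    calc mNeg x (i-1) = S / r := heq
      _ ≤ S / ((r:ℝ) - 1) := by
          have hr0 : (0:ℝ) < (r:ℝ) := by positivity
          exact div_le_div_of_nonneg_left hS0 hcast (by linarith)
      _ = (∑ j ∈ Finset.Icc (i+1) (i + (r-1)), shiftF x c j) / ((r-1 : ℤ) : ℝ) := by
          rw [hwin]; norm_num
      _ ≤ mNeg (shiftF x c) i := le_mNeg hq1 hq2

lemma mNeg_shiftF_high {c : ℤ} (hc : c ≤ -1) (h1 : c + 1 ≤ i) (h2 : i ≤ -1) :
    mNeg (shiftF x c) i = mNeg x i := by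
  refine (mNeg_congr (x := x) (y := shiftF x c) (fun j hj hj' => ?_) h2).symm
  exact (shiftF_high (show c + 2 ≤ j by omega)).symm

lemma dm_shiftF_high {c : ℤ} (hc : c ≤ -1) (h1 : c + 1 ≤ i) (h2 : i ≤ 0) : dm p (shiftF x c) i = dm p x i := by
  unfold dm
  by_cases h : i = 0
  · rw [if_pos h, if_pos h]
  · rw [if_neg h, if_neg h]
    exact mNeg_shiftF_high hc h1 (by omega)

lemma shiftF_sum {L c : ℤ} (hL : ∀ i, i < L → x i = 0) (hLc : L ≤ c) (hc : c ≤ -1) :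
    ∑ i ∈ Icc L 0, shiftF x c i = ∑ i ∈ Icc L 0, x i := by
  have e1 : ∑ i ∈ Icc L 0, shiftF x c i
      = (∑ i ∈ Icc L c, shiftF x c i) + ∑ i ∈ Icc (c+1) 0, shiftF x c i :=
    sum_split _ (by omega) (by omega)
  have e2 : ∑ i ∈ Icc (c+1) 0, shiftF x c i
      = (∑ i ∈ Icc (c+1) (c+1), shiftF x c i) + ∑ i ∈ Icc (c+2) 0, shiftF x c i := by
    have h := sum_split (shiftF x c) (a := c+1) (m := c+1) (b := 0) (by omega) (by omega)
    rw [show c+1+1 = c+2 by ring] at h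
    exact h
  have e3 : ∑ i ∈ Icc L c, shiftF x c i = ∑ i ∈ Icc (L-1) (c-1), x i := by
    rw [Finset.sum_congr rfl (fun j hj => shiftF_low (Finset.mem_Icc.mp hj).2)]
    exact sum_shift_idx x L c
  have e4 : ∑ i ∈ Icc (c+1) (c+1), shiftF x c i = x c + x (c+1) := by
    rw [Finset.Icc_self, Finset.sum_singleton, shiftF_mid]
  have e5 : ∑ i ∈ Icc (c+2) 0, shiftF x c i = ∑ i ∈ Icc (c+2) 0, x i :=
    Finset.sum_congr rfl (fun j hj => shiftF_high (Finset.mem_Icc.mp hj).1)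
  have f1 : ∑ i ∈ Icc (L-1) 0, x i = (∑ i ∈ Icc (L-1) (c-1), x i) + ∑ i ∈ Icc c 0, x i := by
    have h := sum_split x (a := L-1) (m := c-1) (b := 0) (by omega) (by omega)
    rw [show c-1+1 = c by ring] at h
    exact h
  have f2 : ∑ i ∈ Icc c 0, x i = x c + ∑ i ∈ Icc (c+1) 0, x i := by
    have h := sum_split x (a := c) (m := c) (b := 0) (by omega) (by omega)
    rw [h, Finset.Icc_self, Finset.sum_singleton]
  have f3 : ∑ i ∈ Icc (c+1) 0, x i = x (c+1) + ∑ i ∈ Icc (c+2) 0, x i := by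
    have h := sum_split x (a := c+1) (m := c+1) (b := 0) (by omega) (by omega)
    rw [show c+1+1 = c+2 by ring] at h
    rw [h, Finset.Icc_self, Finset.sum_singleton]
  have f4 : ∑ i ∈ Icc (L-1) 0, x i = x (L-1) + ∑ i ∈ Icc L 0, x i := by
    have h := sum_split x (a := L-1) (m := L-1) (b := 0) (by omega) (by omega)
    rw [show L-1+1 = L by ring] at h
    rw [h, Finset.Icc_self, Finset.sum_singleton]
  have hL0 : x (L-1) = 0 := hL _ (by omega)
  rw [e1, e2, e3, e4, e5]
  have := f4.symm.trans f1
  rw [hL0, zero_add] at this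
  linarith [this, f2, f3]

lemma tm_mono_dm {z : ℝ} {d d' : ℝ} (h : d ≤ d') :
    ENNReal.ofReal z / ENNReal.ofReal d' ≤ ENNReal.ofReal z / ENNReal.ofReal d :=
  ENNReal.div_le_div_left (ENNReal.ofReal_le_ofReal h) _

lemma Tval_shiftF_le {L c : ℤ} (hnn : ∀ j, 0 ≤ x j)
    (hL : ∀ i, i < L → x i = 0) (hLc : L ≤ c) (hc : c ≤ -1)
    (hcond : dm p x c ≤ dm p x (c+1)) :
    Tval (shiftF x c) p ≤ Tval x p := by
  have hyL : ∀ i, i < L → shiftF x c i = 0 := by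
    intro i hi
    rw [shiftF_low (by omega)]
    exact hL _ (by omega)
  rw [Tval_eq_sum (x := shiftF x c) (L := L) (by omega) hyL,
      Tval_eq_sum (x := x) (L := L - 1) (by omega) (fun i hi => hL i (by omega))]
  -- decompose both sides
  have ey : ∑ i ∈ Icc L 0, tm p (shiftF x c) i
      = (∑ i ∈ Icc L c, tm p (shiftF x c) i) + (tm p (shiftF x c) (c+1)
        + ∑ i ∈ Icc (c+2) 0, tm p (shiftF x c) i) := by
    have h1 : ∑ i ∈ Icc L 0, tm p (shiftF x c) i
        = (∑ i ∈ Icc L c, tm p (shiftF x c) i) + ∑ i ∈ Icc (c+1) 0, tm p (shiftF x c) i :=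
      sum_split _ (by omega) (by omega)
    have h2 : ∑ i ∈ Icc (c+1) 0, tm p (shiftF x c) i
        = tm p (shiftF x c) (c+1) + ∑ i ∈ Icc (c+2) 0, tm p (shiftF x c) i := by
      have h := sum_split (tm p (shiftF x c)) (a := c+1) (m := c+1) (b := 0) (by omega) (by omega)
      rw [show c+1+1 = c+2 by ring] at h
      rw [h, Finset.Icc_self, Finset.sum_singleton]
    rw [h1, h2]
  have ex : ∑ i ∈ Icc (L-1) 0, tm p x i
      = (∑ i ∈ Icc (L-1) (c-1), tm p x i) + ((tm p x c + tm p x (c+1))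
        + ∑ i ∈ Icc (c+2) 0, tm p x i) := by
    have h1 : ∑ i ∈ Icc (L-1) 0, tm p x i
        = (∑ i ∈ Icc (L-1) (c-1), tm p x i) + ∑ i ∈ Icc c 0, tm p x i := by
      have h := sum_split (tm p x) (a := L-1) (m := c-1) (b := 0) (by omega) (by omega)
      rw [show c-1+1 = c by ring] at h
      exact h
    have h2 : ∑ i ∈ Icc c 0, tm p x i = tm p x c + ∑ i ∈ Icc (c+1) 0, tm p x i := by
      have h := sum_split (tm p x) (a := c) (m := c) (b := 0) (by omega) (by omega)
      rw [h, Finset.Icc_self, Finset.sum_singleton]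
    have h3 : ∑ i ∈ Icc (c+1) 0, tm p x i = tm p x (c+1) + ∑ i ∈ Icc (c+2) 0, tm p x i := by
      have h := sum_split (tm p x) (a := c+1) (m := c+1) (b := 0) (by omega) (by omega)
      rw [show c+1+1 = c+2 by ring] at h
      rw [h, Finset.Icc_self, Finset.sum_singleton]
    rw [h1, h2, h3, add_assoc]
  rw [ey, ex]
  have piece1 : ∑ i ∈ Icc L c, tm p (shiftF x c) i ≤ ∑ i ∈ Icc (L-1) (c-1), tm p x i := by
    have step : ∀ i ∈ Icc L c, tm p (shiftF x c) i ≤ tm p x (i-1) := by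
      intro i hi
      simp only [Finset.mem_Icc] at hi
      unfold tm
      have hyi : shiftF x c i = x (i-1) := shiftF_low hi.2
      rw [hyi]
      unfold dm
      rw [if_neg (by omega), if_neg (by omega)]
      exact tm_mono_dm (mNeg_shiftF_ge hnn hc hi.2)
    calc ∑ i ∈ Icc L c, tm p (shiftF x c) i ≤ ∑ i ∈ Icc L c, tm p x (i-1) :=
          Finset.sum_le_sum step
      _ = ∑ i ∈ Icc (L-1) (c-1), tm p x i := sum_shift_idx _ L c
  have piece2 : tm p (shiftF x c) (c+1) ≤ tm p x c + tm p x (c+1) := by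
    unfold tm
    rw [shiftF_mid, dm_shiftF_high hc (by omega) (by omega)]
    rw [ENNReal.ofReal_add (hnn c) (hnn (c+1)), ENNReal.add_div]
    apply add_le_add_left
    exact tm_mono_dm hcond
  have piece3 : ∑ i ∈ Icc (c+2) 0, tm p (shiftF x c) i = ∑ i ∈ Icc (c+2) 0, tm p x i := by
    apply Finset.sum_congr rfl
    intro i hi
    simp only [Finset.mem_Icc] at hi
    unfold tm
    rw [shiftF_high hi.1, dm_shiftF_high hc (by omega) (by omega)]
  rw [piece3]
  exact add_le_add piece1 (add_le_add_left piece2 _)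

lemma term_le_Tval {c : ℤ} (hc : c ≤ -1) :
    ENNReal.ofReal (x c) / ENNReal.ofReal (mNeg x c) ≤ Tval x p := by
  unfold Tval
  refine le_trans ?_ le_self_add
  exact ENNReal.le_tsum (⟨c, hc⟩ : {z : ℤ // z ≤ -1})

lemma mNeg_pos_of_finite {c : ℤ} (hc : c ≤ -1) (hx : 0 < x c) (hfin : Tval x p ≠ ⊤) :
    0 < mNeg x c := by
  by_contra h
  push_neg at h
  have h0 : ENNReal.ofReal (mNeg x c) = 0 := by
    simpa [ENNReal.ofReal_eq_zero] using h
  have hnum : ENNReal.ofReal (x c) ≠ 0 := by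
    simp [ENNReal.ofReal_eq_zero]
    linarith
  have htop : ENNReal.ofReal (x c) / ENNReal.ofReal (mNeg x c) = ⊤ := by
    rw [h0]
    exact ENNReal.div_zero hnum
  exact hfin (top_le_iff.mp (htop ▸ term_le_Tval hc))

lemma Tval_shiftF_lt {L c : ℤ} (hnn : ∀ j, 0 ≤ x j)
    (hL : ∀ i, i < L → x i = 0) (hLc : L ≤ c) (hc : c ≤ -1)
    (hxc : 0 < x c) (hmpos : 0 < mNeg x c) (hstrict : mNeg x c < dm p x (c+1))
    (hfin : Tval x p ≠ ⊤) :
    Tval (shiftF x c) p < Tval x p := by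
  have hle := Tval_shiftF_le (p := p) hnn hL hLc hc (le_of_lt (by
    show dm p x c < dm p x (c+1)
    unfold dm
    rw [if_neg (by omega)]
    exact hstrict))
  -- strict part: the term at c strictly dropped; we show Tval y + ε ≤ Tval x
  set A := ENNReal.ofReal (x c) with hA
  have hA0 : A ≠ 0 := by
    simp [hA, ENNReal.ofReal_eq_zero]; linarith
  have hAtop : A ≠ ⊤ := ENNReal.ofReal_ne_top
  set m' := ENNReal.ofReal (mNeg x c) with hm'
  set M' := ENNReal.ofReal (dm p x (c+1)) with hM'
  have hmM : m' < M' := by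
    rw [hm', hM']
    exact (ENNReal.ofReal_lt_ofReal_iff (lt_of_le_of_lt (le_of_lt hmpos) hstrict)).mpr hstrict
  have hm0 : m' ≠ 0 := by
    simp [hm', ENNReal.ofReal_eq_zero]; linarith
  have hdivlt : A / M' < A / m' := by
    rw [div_eq_mul_inv, div_eq_mul_inv]
    rw [ENNReal.mul_lt_mul_iff_right hA0 hAtop]
    exact ENNReal.inv_lt_inv.mpr hmM
  -- ε plan
  set ε := A / m' - A / M' with hε
  have hεpos : ε ≠ 0 := by
    rw [hε]
    simpa using (tsub_pos_of_lt hdivlt).ne'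
  have hyfin : Tval (shiftF x c) p ≠ ⊤ := by
    intro h
    exact hfin (top_le_iff.mp (h ▸ hle))
  -- key: Tval y + ε ≤ Tval x
  have hkey : Tval (shiftF x c) p + ε ≤ Tval x p := by
    have hyL : ∀ i, i < L → shiftF x c i = 0 := by
      intro i hi
      rw [shiftF_low (by omega)]
      exact hL _ (by omega)
    rw [Tval_eq_sum (x := shiftF x c) (L := L) (by omega) hyL,
        Tval_eq_sum (x := x) (L := L - 1) (by omega) (fun i hi => hL i (by omega))]
    have ey : ∑ i ∈ Icc L 0, tm p (shiftF x c) i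
        = (∑ i ∈ Icc L c, tm p (shiftF x c) i) + (tm p (shiftF x c) (c+1)
          + ∑ i ∈ Icc (c+2) 0, tm p (shiftF x c) i) := by
      have h1 : ∑ i ∈ Icc L 0, tm p (shiftF x c) i
          = (∑ i ∈ Icc L c, tm p (shiftF x c) i) + ∑ i ∈ Icc (c+1) 0, tm p (shiftF x c) i :=
        sum_split _ (by omega) (by omega)
      have h2 : ∑ i ∈ Icc (c+1) 0, tm p (shiftF x c) i
          = tm p (shiftF x c) (c+1) + ∑ i ∈ Icc (c+2) 0, tm p (shiftF x c) i := by
        have h := sum_split (tm p (shiftF x c)) (a := c+1) (m := c+1) (b := 0) (by omega) (by omega)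
        rw [show c+1+1 = c+2 by ring] at h
        rw [h, Finset.Icc_self, Finset.sum_singleton]
      rw [h1, h2]
    have ex : ∑ i ∈ Icc (L-1) 0, tm p x i
        = (∑ i ∈ Icc (L-1) (c-1), tm p x i) + ((tm p x c + tm p x (c+1))
          + ∑ i ∈ Icc (c+2) 0, tm p x i) := by
      have h1 : ∑ i ∈ Icc (L-1) 0, tm p x i
          = (∑ i ∈ Icc (L-1) (c-1), tm p x i) + ∑ i ∈ Icc c 0, tm p x i := by
        have h := sum_split (tm p x) (a := L-1) (m := c-1) (b := 0) (by omega) (by omega)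
        rw [show c-1+1 = c by ring] at h
        exact h
      have h2 : ∑ i ∈ Icc c 0, tm p x i = tm p x c + ∑ i ∈ Icc (c+1) 0, tm p x i := by
        have h := sum_split (tm p x) (a := c) (m := c) (b := 0) (by omega) (by omega)
        rw [h, Finset.Icc_self, Finset.sum_singleton]
      have h3 : ∑ i ∈ Icc (c+1) 0, tm p x i = tm p x (c+1) + ∑ i ∈ Icc (c+2) 0, tm p x i := by
        have h := sum_split (tm p x) (a := c+1) (m := c+1) (b := 0) (by omega) (by omega)
        rw [show c+1+1 = c+2 by ring] at h
        rw [h, Finset.Icc_self, Finset.sum_singleton]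
      rw [h1, h2, h3, add_assoc]
    rw [ey, ex]
    have piece1 : ∑ i ∈ Icc L c, tm p (shiftF x c) i ≤ ∑ i ∈ Icc (L-1) (c-1), tm p x i := by
      have step : ∀ i ∈ Icc L c, tm p (shiftF x c) i ≤ tm p x (i-1) := by
        intro i hi
        simp only [Finset.mem_Icc] at hi
        unfold tm
        have hyi : shiftF x c i = x (i-1) := shiftF_low hi.2
        rw [hyi]
        unfold dm
        rw [if_neg (by omega), if_neg (by omega)]
        exact tm_mono_dm (mNeg_shiftF_ge hnn hc hi.2)
      calc ∑ i ∈ Icc L c, tm p (shiftF x c) i ≤ ∑ i ∈ Icc L c, tm p x (i-1) :=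
            Finset.sum_le_sum step
        _ = ∑ i ∈ Icc (L-1) (c-1), tm p x i := sum_shift_idx _ L c
    have piece2 : tm p (shiftF x c) (c+1) + ε ≤ tm p x c + tm p x (c+1) := by
      have e1 : tm p x c = A / m' := by
        unfold tm dm
        rw [if_neg (show ¬c = 0 by omega)]
      have e2 : tm p x (c+1) = ENNReal.ofReal (x (c+1)) / M' := by
        unfold tm
        rw [← hM']
      have e3 : tm p (shiftF x c) (c+1) = A / M' + ENNReal.ofReal (x (c+1)) / M' := by
        unfold tm
        rw [shiftF_mid, dm_shiftF_high hc (by omega) (by omega),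
          ENNReal.ofReal_add (hnn c) (hnn (c+1)), ← hA, ← hM', ENNReal.add_div]
      have hcancel : A / M' + ε = A / m' := by
        rw [hε]
        exact add_tsub_cancel_of_le (le_of_lt hdivlt)
      rw [e1, e2, e3]
      refine le_of_eq ?_
      calc A / M' + ENNReal.ofReal (x (c+1)) / M' + ε
          = (A / M' + ε) + ENNReal.ofReal (x (c+1)) / M' := by ring
        _ = A / m' + ENNReal.ofReal (x (c+1)) / M' := by rw [hcancel]
    have piece3 : ∑ i ∈ Icc (c+2) 0, tm p (shiftF x c) i = ∑ i ∈ Icc (c+2) 0, tm p x i := by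
      apply Finset.sum_congr rfl
      intro i hi
      simp only [Finset.mem_Icc] at hi
      unfold tm
      rw [shiftF_high hi.1, dm_shiftF_high hc (by omega) (by omega)]
    rw [piece3]
    calc (∑ i ∈ Icc L c, tm p (shiftF x c) i) + (tm p (shiftF x c) (c+1)
          + ∑ i ∈ Icc (c+2) 0, tm p x i) + ε
        = (∑ i ∈ Icc L c, tm p (shiftF x c) i) + ((tm p (shiftF x c) (c+1) + ε)
          + ∑ i ∈ Icc (c+2) 0, tm p x i) := by ring
      _ ≤ (∑ i ∈ Icc (L-1) (c-1), tm p x i) + ((tm p x c + tm p x (c+1))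
          + ∑ i ∈ Icc (c+2) 0, tm p x i) := by
          exact add_le_add piece1 (add_le_add_left piece2 _)
  calc Tval (shiftF x c) p < Tval (shiftF x c) p + ε := ENNReal.lt_add_right hyfin hεpos
    _ ≤ Tval x p := hkey

lemma gap_exists (hnn : ∀ j, 0 ≤ x j) {i1 : ℤ} (hi1 : i1 ≤ -1) (hx : 0 < x i1)
    (htot : ∑ j ∈ Icc i1 0, x j ≤ 1) (hp : 1 ≤ ((-i1 : ℤ) : ℝ) * p) :
    ∃ j, i1 ≤ j ∧ j ≤ -1 ∧ mNeg x j < p := by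
  by_contra hcon
  push_neg at hcon
  have main : ∀ k : ℕ, ∀ b : ℤ, i1 ≤ b → b ≤ 0 → b = -(k:ℤ) →
      ((-b : ℤ) : ℝ) * p ≤ ∑ j ∈ Icc (b+1) 0, x j := by
    intro k
    induction k using Nat.strong_induction_on with
    | _ k IH =>
      intro b hb1 hb2 hbk
      rcases eq_or_lt_of_le hb2 with h0 | hneg
      · rw [h0]
        have he : Finset.Icc ((0:ℤ)+1) 0 = ∅ := Finset.Icc_eq_empty (by omega)
        rw [he, Finset.sum_empty]
        norm_num
      · have hble : b ≤ -1 := by omega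
        have hm := hcon b hb1 hble
        obtain ⟨r, hr1, hr2, heq⟩ := mNeg_exists (x := x) (i := b) hble
        have hrpos : (0:ℝ) < (r:ℝ) := by exact_mod_cast hr1
        have hwin : p * (r:ℝ) ≤ ∑ j ∈ Icc (b+1) (b+r), x j := by
          have h1 : p ≤ (∑ j ∈ Icc (b+1) (b+r), x j) / (r:ℝ) := heq ▸ hm
          calc p * (r:ℝ) ≤ ((∑ j ∈ Icc (b+1) (b+r), x j) / (r:ℝ)) * (r:ℝ) := by
                exact mul_le_mul_of_nonneg_right h1 (le_of_lt hrpos)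
            _ = ∑ j ∈ Icc (b+1) (b+r), x j := by field_simp
        set b' := b + r with hb'
        have hb'le : b' ≤ 0 := by omega
        have hb'gt : b < b' := by omega
        have hk' : (-b').toNat < k := by omega
        have hIH := IH (-b').toNat (by omega) b' (by omega) hb'le (by omega)
        have hsplit : ∑ j ∈ Icc (b+1) 0, x j
            = (∑ j ∈ Icc (b+1) b', x j) + ∑ j ∈ Icc (b'+1) 0, x j :=
          sum_split _ (by omega) (by omega)
        have hcast : ((-b : ℤ) : ℝ) * p = p * (r:ℝ) + ((-b' : ℤ) : ℝ) * p := by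
          have hbb : b' = b + r := rfl
          rw [hbb]
          push_cast
          ring
        rw [hsplit, hcast]
        exact add_le_add hwin hIH
  have hfinal := main (-i1).toNat i1 le_rfl (by omega) (by omega)
  have hsum : ∑ j ∈ Icc i1 0, x j = x i1 + ∑ j ∈ Icc (i1+1) 0, x j := by
    have h := sum_split x (a := i1) (m := i1) (b := 0) (by omega) (by omega)
    rw [h, Finset.Icc_self, Finset.sum_singleton]
  linarith

lemma gap_max (hnn : ∀ j, 0 ≤ x j) {i1 : ℤ} (hi1 : i1 ≤ -1) (hx : 0 < x i1)
    (htot : ∑ j ∈ Icc i1 0, x j ≤ 1) (hp : 1 ≤ ((-i1 : ℤ) : ℝ) * p) :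
    ∃ j, i1 ≤ j ∧ j ≤ -1 ∧ mNeg x j < p ∧ (∀ j', j < j' → j' ≤ -1 → p ≤ mNeg x j') := by
  obtain ⟨j0, hj1, hj2, hj3⟩ := gap_exists hnn hi1 hx htot hp
  have hne : ((Finset.Icc i1 (-1)).filter (fun j => mNeg x j < p)).Nonempty :=
    ⟨j0, Finset.mem_filter.mpr ⟨Finset.mem_Icc.mpr ⟨hj1, hj2⟩, hj3⟩⟩
  obtain ⟨hmem1, hmem2⟩ := Finset.mem_filter.mp (Finset.max'_mem _ hne)
  rw [Finset.mem_Icc] at hmem1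
  refine ⟨_, hmem1.1, hmem1.2, hmem2, ?_⟩
  intro j' hgt hle
  by_contra hcon
  push_neg at hcon
  have hj'mem : j' ∈ (Finset.Icc i1 (-1)).filter (fun j => mNeg x j < p) :=
    Finset.mem_filter.mpr ⟨Finset.mem_Icc.mpr ⟨by omega, hle⟩, hcon⟩
  have := Finset.le_max' _ j' hj'mem
  omega

/-- The point mass at `0`. -/
noncomputable def delta0 : ℤ → ℝ := fun i => if i = 0 then 1 else 0

lemma delta0_mem {N : ℕ} (hN : 1 ≤ N) : delta0 ∈ Delta N := by
  refine ⟨fun i => ?_, fun i hi => ?_, fun i hi => ?_, ?_⟩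
  · unfold delta0
    split <;> norm_num
  · unfold delta0
    rw [if_neg (by omega)]
  · unfold delta0
    rw [if_neg (by omega)]
  · have h0 : (0:ℤ) ∈ Finset.Icc (1 - (N:ℤ)) 0 := by
      rw [Finset.mem_Icc]
      omega
    rw [Finset.sum_eq_single 0]
    · unfold delta0; rw [if_pos rfl]
    · intro b _ hb
      unfold delta0; rw [if_neg hb]
    · intro h
      exact absurd h0 h

lemma Tval_delta0 : Tval delta0 p = ENNReal.ofReal 1 / ENNReal.ofReal p := by
  rw [Tval_eq_sum (x := delta0) (L := 0) le_rfl (fun i hi => by unfold delta0; rw [if_neg (by omega)])]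
  rw [Finset.Icc_self, Finset.sum_singleton]
  unfold tm dm delta0
  rw [if_pos rfl, if_pos rfl]

lemma Tstar_le_inv {N : ℕ} (hN : 1 ≤ N) : Tstar N p ≤ ENNReal.ofReal 1 / ENNReal.ofReal p := by
  apply sInf_le
  exact ⟨delta0, delta0_mem hN, Tval_delta0.symm⟩

lemma Tstar_ne_top (hp : 0 < p) {N : ℕ} (hN : 1 ≤ N) : Tstar N p ≠ ⊤ := by
  intro h
  have h2 := Tstar_le_inv (p := p) hN
  rw [h, top_le_iff] at h2
  have : ENNReal.ofReal 1 / ENNReal.ofReal p < ⊤ := by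
    apply ENNReal.div_lt_top
    · exact ENNReal.ofReal_ne_top
    · simp [ENNReal.ofReal_eq_zero]
      exact hp
  rw [h2] at this
  exact absurd this (lt_irrefl _)

lemma Delta_subset {N M : ℕ} (h : N ≤ M) : Delta N ⊆ Delta M := by
  intro x hx
  obtain ⟨h1, h2, h3, h4⟩ := hx
  refine ⟨h1, fun i hi => h2 i (by omega), h3, ?_⟩
  have hsplit : ∑ i ∈ Icc (1 - (M:ℤ)) 0, x i
      = (∑ i ∈ Icc (1 - (M:ℤ)) (-(N:ℤ)), x i) + ∑ i ∈ Icc (-(N:ℤ)+1) 0, x i :=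
    sum_split _ (by omega) (by omega)
  have hz : ∑ i ∈ Icc (1 - (M:ℤ)) (-(N:ℤ)), x i = 0 := by
    apply Finset.sum_eq_zero
    intro i hi
    rw [Finset.mem_Icc] at hi
    exact h2 i (by omega)
  rw [hsplit, hz, zero_add, show -(N:ℤ)+1 = 1 - (N:ℤ) by ring]
  exact h4

lemma Tstar_anti {N M : ℕ} (h : N ≤ M) : Tstar M p ≤ Tstar N p := by
  apply sInf_le_sInf
  rintro t ⟨x, hx, rfl⟩
  exact ⟨x, Delta_subset h hx, rfl⟩

lemma core (hp : 0 < p) {N : ℕ} (hN1 : 1 ≤ N) (hNp : 1 ≤ (N:ℝ) * p) :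
    ∀ d : ℕ, ∀ x : ℤ → ℝ, (∀ i, 0 ≤ x i) → (∀ i : ℤ, 0 < i → x i = 0) →
      (∀ i : ℤ, i < -(d:ℤ) → x i = 0) → (∑ i ∈ Icc (-(d:ℤ)) 0, x i = 1) →
      Tstar N p ≤ Tval x p := by
  intro d
  induction d using Nat.strong_induction_on with
  | _ d IH =>
    intro x hnn hpos hlo hsum
    by_cases hdN : (d:ℤ) ≤ (N:ℤ) - 1
    · -- x ∈ Delta N
      apply sInf_le
      refine ⟨x, ⟨hnn, fun i hi => hlo i (by omega), hpos, ?_⟩, rfl⟩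
      have hsplit : ∑ i ∈ Icc (1 - (N:ℤ)) 0, x i
          = (∑ i ∈ Icc (1 - (N:ℤ)) (-(d:ℤ)-1), x i) + ∑ i ∈ Icc (-(d:ℤ)) 0, x i := by
        have h := sum_split x (a := 1 - (N:ℤ)) (m := -(d:ℤ)-1) (b := 0) (by omega) (by omega)
        rw [show -(d:ℤ)-1+1 = -(d:ℤ) by ring] at h
        exact h
      have hz : ∑ i ∈ Icc (1 - (N:ℤ)) (-(d:ℤ)-1), x i = 0 := by
        apply Finset.sum_eq_zero
        intro i hi
        rw [Finset.mem_Icc] at hi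
        exact hlo i (by omega)
      rw [hsplit, hz, zero_add]
      exact hsum
    · push_neg at hdN
      have hd1 : 1 ≤ d := by omega
      by_cases hz : x (-(d:ℤ)) = 0
      ·
        have hlo' : ∀ i : ℤ, i < -((d-1 : ℕ):ℤ) → x i = 0 := by
          intro i hi
          have : (((d-1:ℕ)):ℤ) = (d:ℤ) - 1 := by omega
          rw [this] at hi
          rcases eq_or_lt_of_le (show i ≤ -(d:ℤ) by omega) with h | h
          · rw [h]; exact hz
          · exact hlo i h
        have hsum' : ∑ i ∈ Icc (-((d-1:ℕ):ℤ)) 0, x i = 1 := by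
          have hcast : (((d-1:ℕ)):ℤ) = (d:ℤ) - 1 := by omega
          rw [hcast]
          have h := sum_split x (a := -(d:ℤ)) (m := -(d:ℤ)) (b := 0) (by omega) (by omega)
          rw [h, Finset.Icc_self, Finset.sum_singleton] at hsum
          rw [hz, zero_add] at hsum
          rw [show -((d:ℤ)-1) = -(d:ℤ)+1 by ring]
          exact hsum
        exact IH (d-1) (by omega) x hnn hpos hlo' hsum'
      · -- genuine deep mass: shift
        have hxpos : 0 < x (-(d:ℤ)) := lt_of_le_of_ne (hnn _) (Ne.symm hz)
        have hdp : 1 ≤ ((-(-(d:ℤ)) : ℤ) : ℝ) * p := by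
          have : ((-(-(d:ℤ)) : ℤ) : ℝ) = (d:ℝ) := by push_cast; ring
          rw [this]
          have hdN' : (N:ℝ) ≤ (d:ℝ) := by exact_mod_cast (by omega : N ≤ d)
          calc (1:ℝ) ≤ (N:ℝ) * p := hNp
            _ ≤ (d:ℝ) * p := by
                apply mul_le_mul_of_nonneg_right hdN' (le_of_lt hp)
        obtain ⟨c, hc1, hc2, hc3, hc4⟩ := gap_max hnn (show -(d:ℤ) ≤ -1 by omega) hxpos
          (le_of_eq hsum) hdp
        have hcond : dm p x c ≤ dm p x (c+1) := by
          have hlhs : dm p x c = mNeg x c := by unfold dm; rw [if_neg (by omega)]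
          have hrhs : p ≤ dm p x (c+1) := by
            unfold dm
            by_cases h0 : c + 1 = 0
            · rw [if_pos h0]
            · rw [if_neg h0]
              exact hc4 (c+1) (by omega) (by omega)
          rw [hlhs]
          exact le_trans (le_of_lt hc3) hrhs
        have hshift := Tval_shiftF_le (p := p) hnn hlo (show -(d:ℤ) ≤ c from hc1) hc2 hcond
        set y := shiftF x c with hy
        have hynn : ∀ i, 0 ≤ y i := by
          intro i
          rw [hy]
          unfold shiftF
          split
          · exact hnn _
          · split
            · exact add_nonneg (hnn _) (hnn _)
            · exact hnn _
        have hypos : ∀ i : ℤ, 0 < i → y i = 0 := by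
          intro i hi
          rw [hy, shiftF_high (by omega)]
          exact hpos i hi
        have hylo : ∀ i : ℤ, i < -((d-1:ℕ):ℤ) → y i = 0 := by
          intro i hi
          have hcast : (((d-1:ℕ)):ℤ) = (d:ℤ) - 1 := by omega
          rw [hcast] at hi
          rw [hy, shiftF_low (by omega)]
          exact hlo _ (by omega)
        have hysum : ∑ i ∈ Icc (-((d-1:ℕ):ℤ)) 0, y i = 1 := by
          have hcast : (((d-1:ℕ)):ℤ) = (d:ℤ) - 1 := by omega
          rw [hcast]
          have htot : ∑ i ∈ Icc (-(d:ℤ)) 0, y i = 1 := by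
            rw [hy, shiftF_sum hlo hc1 hc2]
            exact hsum
          have h := sum_split y (a := -(d:ℤ)) (m := -(d:ℤ)) (b := 0) (by omega) (by omega)
          rw [h, Finset.Icc_self, Finset.sum_singleton] at htot
          have hyz : y (-(d:ℤ)) = 0 := by
            rw [hy, shiftF_low (by omega)]
            exact hlo _ (by omega)
          rw [hyz, zero_add] at htot
          rw [show -((d:ℤ)-1) = -(d:ℤ)+1 by ring]
          exact htot
        calc Tstar N p ≤ Tval y p := IH (d-1) (by omega) y hynn hypos hylo hysum
          _ ≤ Tval x p := hshift

lemma shiftF_mem_Delta {N : ℕ} {c : ℤ} (hx : x ∈ Delta N) (hc1 : 1 - (N:ℤ) ≤ c) (hc2 : c ≤ -1) :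
    shiftF x c ∈ Delta N := by
  obtain ⟨h1, h2, h3, h4⟩ := hx
  refine ⟨fun i => ?_, fun i hi => ?_, fun i hi => ?_, ?_⟩
  · unfold shiftF
    split
    · exact h1 _
    · split
      · exact add_nonneg (h1 _) (h1 _)
      · exact h1 _
  · by_cases hic : i ≤ c
    · rw [shiftF_low hic]
      exact h2 _ (by omega)
    · by_cases hic2 : i = c + 1
      · rw [hic2, shiftF_mid, h2 c (by omega), h2 (c+1) (by omega), add_zero]
      · rw [shiftF_high (by omega)]
        exact h2 _ hi
  · rw [shiftF_high (by omega)]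
    exact h3 _ hi
  · rw [shiftF_sum (fun i hi => h2 i (by omega)) hc1 hc2]
    exact h4

lemma part2_aux (hp : 0 < p) {N : ℕ} (hN1 : 1 ≤ N) :
    ∀ k : ℕ, ∀ x : ℤ → ℝ, x ∈ Delta N → Tval x p = Tstar N p →
      ∀ c i1 : ℤ, c ≤ -1 → mNeg x c < p → (∀ j', c < j' → j' ≤ -1 → p ≤ mNeg x j') →
      i1 ≤ c → x i1 ≠ 0 → c - i1 = (k:ℤ) → False := by
  intro k
  induction k with
  | zero =>
    intro x hxD hxmin c i1 hc hc3 hc4 hi1c hxi1 hk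
    obtain ⟨hnn, hzero, hpos, hsum⟩ := hxD
    have hi1eq : i1 = c := by omega
    have hxc : 0 < x c := by
      rw [hi1eq] at hxi1
      exact lt_of_le_of_ne (hnn c) (Ne.symm hxi1)
    have hfin : Tval x p ≠ ⊤ := by
      rw [hxmin]
      exact Tstar_ne_top hp hN1
    have hiN : 1 - (N:ℤ) ≤ c := by
      by_contra hcon
      exact hxi1 (hzero i1 (by omega))
    have hL : ∀ i : ℤ, i < 1 - (N:ℤ) → x i = 0 := fun i hi => hzero i (by omega)
    have hmpos : 0 < mNeg x c := mNeg_pos_of_finite hc hxc hfin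
    have hstrict : mNeg x c < dm p x (c+1) := by
      unfold dm
      by_cases h0 : c + 1 = 0
      · rw [if_pos h0]; exact hc3
      · rw [if_neg h0]
        exact lt_of_lt_of_le hc3 (hc4 (c+1) (by omega) (by omega))
    have hlt := Tval_shiftF_lt (p := p) hnn hL hiN hc hxc hmpos hstrict hfin
    have hyD : shiftF x c ∈ Delta N := shiftF_mem_Delta ⟨hnn, hzero, hpos, hsum⟩ hiN hc
    have hle : Tstar N p ≤ Tval (shiftF x c) p := sInf_le ⟨_, hyD, rfl⟩
    rw [hxmin] at hlt
    exact absurd (lt_of_le_of_lt hle hlt) (lt_irrefl _)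
  | succ k IH =>
    intro x hxD hxmin c i1 hc hc3 hc4 hi1c hxi1 hk
    obtain ⟨hnn, hzero, hpos, hsum⟩ := hxD
    by_cases hxc : x c = 0
    · -- weak shift, recurse
      have hiN : 1 - (N:ℤ) ≤ i1 := by
        by_contra hcon
        exact hxi1 (hzero i1 (by omega))
      have hL : ∀ i : ℤ, i < 1 - (N:ℤ) → x i = 0 := fun i hi => hzero i (by omega)
      have hcond : dm p x c ≤ dm p x (c+1) := by
        have hlhs : dm p x c = mNeg x c := by unfold dm; rw [if_neg (by omega)]
        have hrhs : p ≤ dm p x (c+1) := by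
          unfold dm
          by_cases h0 : c + 1 = 0
          · rw [if_pos h0]
          · rw [if_neg h0]
            exact hc4 (c+1) (by omega) (by omega)
        rw [hlhs]
        exact le_trans (le_of_lt hc3) hrhs
      have hyle := Tval_shiftF_le (p := p) hnn hL (by omega) hc hcond
      have hyD : shiftF x c ∈ Delta N := shiftF_mem_Delta ⟨hnn, hzero, hpos, hsum⟩ (by omega) hc
      have hymin : Tval (shiftF x c) p = Tstar N p := by
        apply le_antisymm
        · rw [← hxmin]; exact hyle
        · exact sInf_le ⟨_, hyD, rfl⟩
      have hagree : ∀ j, c + 1 ≤ j → j ≤ 0 → x j = shiftF x c j := by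
        intro j hj1 hj2
        by_cases hj : j = c + 1
        · rw [hj, shiftF_mid, hxc, zero_add]
        · rw [shiftF_high (by omega)]
      have hyc3 : mNeg (shiftF x c) c < p := by
        rw [← mNeg_congr hagree hc]
        exact hc3
      have hyc4 : ∀ j', c < j' → j' ≤ -1 → p ≤ mNeg (shiftF x c) j' := by
        intro j' h1 h2
        rw [mNeg_shiftF_high hc (by omega) h2]
        exact hc4 j' h1 h2
      have hyi1 : shiftF x c (i1 + 1) ≠ 0 := by
        have : i1 ≠ c := fun h => hxi1 (h ▸ hxc)
        rw [shiftF_low (by omega)]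
        simpa using hxi1
      exact IH (shiftF x c) hyD hymin c (i1 + 1) hc hyc3 hyc4 (by
        have : i1 ≠ c := fun h => hxi1 (h ▸ hxc)
        omega) hyi1 (by omega)
    · -- strict shift contradiction (mass sits at c)
      have hxcpos : 0 < x c := lt_of_le_of_ne (hnn c) (Ne.symm hxc)
      have hfin : Tval x p ≠ ⊤ := by
        rw [hxmin]
        exact Tstar_ne_top hp hN1
      have hiN : 1 - (N:ℤ) ≤ c := by
        by_contra hcon
        exact hxc (hzero c (by omega))
      have hL : ∀ i : ℤ, i < 1 - (N:ℤ) → x i = 0 := fun i hi => hzero i (by omega)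
      have hmpos : 0 < mNeg x c := mNeg_pos_of_finite hc hxcpos hfin
      have hstrict : mNeg x c < dm p x (c+1) := by
        unfold dm
        by_cases h0 : c + 1 = 0
        · rw [if_pos h0]; exact hc3
        · rw [if_neg h0]
          exact lt_of_lt_of_le hc3 (hc4 (c+1) (by omega) (by omega))
      have hlt := Tval_shiftF_lt (p := p) hnn hL hiN hc hxcpos hmpos hstrict hfin
      have hyD : shiftF x c ∈ Delta N := shiftF_mem_Delta ⟨hnn, hzero, hpos, hsum⟩ hiN hc
      have hle : Tstar N p ≤ Tval (shiftF x c) p := sInf_le ⟨_, hyD, rfl⟩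
      rw [hxmin] at hlt
      exact absurd (lt_of_le_of_lt hle hlt) (lt_irrefl _)

end TSaux

/-- The nonincreasing sequence `(T_N*(p))_N` stabilizes no later than at
`N = ⌈1/p⌉`: `T^inf(p) = T_N*(p)` for every integer `N ≥ ⌈1/p⌉`. Moreover any
`(N,p)`-minimizer `x` satisfies `x_i = 0` for all `i < −1/p`. -/
theorem Tstar_stabilizes (p : ℝ) (hp : 0 < p) :
    (∀ L : ℝ≥0∞, Tendsto (fun N : ℕ => Tstar N p) atTop (𝓝 L) →
      ∀ N : ℕ, ⌈1 / p⌉ ≤ (N : ℤ) → Tstar N p = L) ∧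
    (∀ N : ℕ, 1 ≤ N → ∀ x ∈ Delta N, Tval x p = Tstar N p →
      ∀ i : ℤ, (i : ℝ) < -(1 / p) → x i = 0) := by
  constructor
  · intro L hL N hN
    have hceil1 : (1:ℤ) ≤ ⌈1/p⌉ := by
      have h : (0:ℝ) < 1/p := by positivity
      exact_mod_cast Int.ceil_pos.mpr h
    have hN1 : 1 ≤ N := by exact_mod_cast le_trans hceil1 hN
    have hNp : 1 ≤ (N:ℝ) * p := by
      have h1 : (1/p : ℝ) ≤ ((⌈1/p⌉ : ℤ) : ℝ) := Int.le_ceil _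
      have h2 : ((⌈1/p⌉:ℤ):ℝ) ≤ ((N:ℤ):ℝ) := by exact_mod_cast hN
      have h3 : (1/p : ℝ) ≤ (N:ℝ) := by
        calc (1/p : ℝ) ≤ ((⌈1/p⌉ : ℤ) : ℝ) := h1
          _ ≤ ((N:ℤ):ℝ) := h2
          _ = (N:ℝ) := by push_cast; ring
      calc (1:ℝ) = (1/p) * p := by field_simp
        _ ≤ (N:ℝ) * p := mul_le_mul_of_nonneg_right h3 (le_of_lt hp)
    have hconst : ∀ M : ℕ, N ≤ M → Tstar M p = Tstar N p := by
      intro M hM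
      apply le_antisymm (TSaux.Tstar_anti hM)
      apply le_sInf
      rintro t ⟨x, hx, rfl⟩
      obtain ⟨h1, h2, h3, h4⟩ := hx
      have hM1 : 1 ≤ M := le_trans hN1 hM
      have hcast : (((M-1:ℕ)):ℤ) = (M:ℤ) - 1 := by omega
      refine TSaux.core hp hN1 hNp (M - 1) x h1 h3 ?_ ?_
      · intro i hi
        rw [hcast] at hi
        exact h2 i (by omega)
      · rw [hcast, show -((M:ℤ)-1) = 1 - (M:ℤ) by ring]
        exact h4
    have hev : (fun M : ℕ => Tstar M p) =ᶠ[atTop] (fun _ => Tstar N p) :=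
      Filter.eventually_atTop.mpr ⟨N, fun M hM => hconst M hM⟩
    have ht2 : Tendsto (fun M : ℕ => Tstar M p) atTop (𝓝 (Tstar N p)) :=
      Filter.Tendsto.congr' hev.symm tendsto_const_nhds
    exact tendsto_nhds_unique ht2 hL
  · intro N hN1 x hxD hxmin i hi
    by_contra hxi
    obtain ⟨hnn, hzero, hpos, hsum⟩ := hxD
    have hp' : (0:ℝ) < 1/p := by positivity
    have hineg : (i:ℝ) < 0 := lt_trans hi (by linarith)
    have hile : i ≤ -1 := by
      have h : i < 0 := by exact_mod_cast hineg
      omega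
    have hp1 : 1 ≤ ((-i : ℤ) : ℝ) * p := by
      have h1 : 1/p < ((-i:ℤ):ℝ) := by push_cast; linarith
      calc (1:ℝ) = (1/p)*p := by field_simp
        _ ≤ ((-i:ℤ):ℝ) * p := mul_le_mul_of_nonneg_right (le_of_lt h1) (le_of_lt hp)
    have hiN : 1 - (N:ℤ) ≤ i := by
      by_contra hcon
      exact hxi (hzero i (by omega))
    have hipos : 0 < x i := lt_of_le_of_ne (hnn i) (Ne.symm hxi)
    have htot : ∑ j ∈ Finset.Icc i 0, x j ≤ 1 := by
      rw [← hsum]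
      apply Finset.sum_le_sum_of_subset_of_nonneg
      · intro j hj
        rw [Finset.mem_Icc] at hj ⊢
        omega
      · intro j _ _
        exact hnn j
    obtain ⟨c, hc1, hc2, hc3, hc4⟩ := TSaux.gap_max hnn hile hipos htot hp1
    exact TSaux.part2_aux hp hN1 (c - i).toNat x ⟨hnn, hzero, hpos, hsum⟩ hxmin c i hc2 hc3 hc4
      hc1 hxi (by omega)
end

section
/- For every N ≥ 1 and every p > 0 there holds the identity T̃_N*(p) = T_N*(p). -/
open Finset Filter Topology
open scoped ENNReal

/-- `T̃_N(x,p) = Σ_{i=1−N}^{−1} x_i/x_{i+1} + x_0/p`, with the convention that a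
term with `x_i = 0` is `0` and the value is `+∞` if `x_i > 0`, `x_{i+1} = 0`. -/
noncomputable def Ttil (N : ℕ) (x : ℤ → ℝ) (p : ℝ) : ℝ≥0∞ :=
  (∑ i ∈ Finset.Icc (1 - (N : ℤ)) (-1), ENNReal.ofReal (x i) / ENNReal.ofReal (x (i + 1))) +
    ENNReal.ofReal (x 0) / ENNReal.ofReal p

/-- `T̃_N*(p) = inf_{x ∈ Δ_N} T̃_N(x,p)`. -/
noncomputable def TtilStar (N : ℕ) (p : ℝ) : ℝ≥0∞ :=
  sInf {t : ℝ≥0∞ | ∃ x ∈ Delta N, t = Ttil N x p}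


open scoped NNReal

/-- max prefix average of a list of nonneg reals -/
noncomputable def Pl (l : List ℝ≥0) : ℝ≥0 :=
  (Finset.Icc 1 l.length).sup fun j => (l.take j).sum / (j : ℝ≥0)

noncomputable def Ttl (p : ℝ≥0∞) : List ℝ≥0 → ℝ≥0∞
  | [] => 0
  | a :: s => (a : ℝ≥0∞) / (if s.isEmpty then p else ((s.headI : ℝ≥0) : ℝ≥0∞)) + Ttl p s

noncomputable def Tl (p : ℝ≥0∞) : List ℝ≥0 → ℝ≥0∞
  | [] => 0
  | a :: s => (a : ℝ≥0∞) / (if s.isEmpty then p else ((Pl s : ℝ≥0) : ℝ≥0∞)) + Tl p s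

lemma Pl_nil : Pl [] = 0 := by simp [Pl]

lemma Pl_cons_le (a : ℝ≥0) (s : List ℝ≥0) : Pl (a :: s) ≤ max a (Pl s) := by
  apply Finset.sup_le
  intro j hj
  simp only [Finset.mem_Icc, List.length_cons] at hj
  obtain ⟨h1, h2⟩ := hj
  obtain ⟨j, rfl⟩ : ∃ m, j = m + 1 := ⟨j - 1, by omega⟩
  rw [List.take_succ_cons, List.sum_cons]
  rcases Nat.eq_zero_or_pos j with rfl | hjpos
  · simp
  · have hPl : (s.take j).sum / (j : ℝ≥0) ≤ Pl s := by
      apply Finset.le_sup (f := fun j => (s.take j).sum / (j : ℝ≥0))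
      simp only [Finset.mem_Icc]
      omega
    have hsum : (s.take j).sum ≤ max a (Pl s) * (j : ℝ≥0) := by
      have h := hPl.trans (le_max_right a (Pl s))
      rwa [div_le_iff₀ (by positivity)] at h
    rw [div_le_iff₀ (by positivity)]
    push_cast
    calc a + (s.take j).sum ≤ max a (Pl s) + max a (Pl s) * (j : ℝ≥0) :=
          add_le_add (le_max_left _ _) hsum
      _ = max a (Pl s) * ((j : ℝ≥0) + 1) := by ring

lemma head_le_Pl (a : ℝ≥0) (s : List ℝ≥0) : a ≤ Pl (a :: s) := by
  have h : (List.take 1 (a :: s)).sum / ((1 : ℕ) : ℝ≥0) ≤ Pl (a :: s) := by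
    apply Finset.le_sup (f := fun j => ((a :: s).take j).sum / (j : ℝ≥0))
    simp [Finset.mem_Icc]
  simpa using h

lemma Ttl_cons₂ (p : ℝ≥0∞) (a b : ℝ≥0) (s : List ℝ≥0) :
    Ttl p (a :: b :: s) = (a : ℝ≥0∞) / (b : ℝ≥0∞) + Ttl p (b :: s) := by
  simp [Ttl]

lemma Ttl_replicate_zero (p : ℝ≥0∞) (n : ℕ) (s : List ℝ≥0) :
    Ttl p (List.replicate n 0 ++ s) = Ttl p s := by
  induction n with
  | zero => simp
  | succ n ih =>
    rw [List.replicate_succ, List.cons_append, Ttl, ih]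
    rcases (List.replicate n (0:ℝ≥0) ++ s).isEmpty |>.eq_false_or_eq_true with h | h <;>
      simp [h]

theorem listMain (p : ℝ≥0∞) (l : List ℝ≥0) (hl : l ≠ []) :
    ∃ (a : ℕ) (v : ℝ≥0) (r : List ℝ≥0),
      (List.replicate a 0 ++ v :: r).length = l.length ∧
      v + r.sum = l.sum ∧
      Pl r ≤ r.headI ∧
      Ttl p (List.replicate a 0 ++ v :: r) ≤ Tl p l ∧
      Pl l ≤ max v r.headI := by
  induction l with
  | nil => exact absurd rfl hl
  | cons x t ih =>
    rcases t with _ | ⟨b, t'⟩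
    · refine ⟨0, x, [], by simp, by simp, by simp [Pl_nil], ?_, ?_⟩
      · simp [Ttl, Tl]
      · refine (Pl_cons_le x []).trans ?_
        simp [Pl_nil]
    · obtain ⟨aa, vv, rr, hlen, hsum, hdom, httl, hden⟩ := ih (by simp)
      set t : List ℝ≥0 := b :: t' with ht
      have htne : t.isEmpty = false := by simp [ht]
      by_cases hAB : rr.headI ≤ vv
      · -- SubA : place x above vv
        have hvmax : max vv rr.headI = vv := max_eq_left hAB
        refine ⟨aa, x, vv :: rr, ?_, ?_, ?_, ?_, ?_⟩
        · simp only [List.length_append, List.length_replicate, List.length_cons] at hlen ⊢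
          omega
        · simp only [List.sum_cons, ht] at hsum ⊢
          rw [hsum]
        · simpa using (Pl_cons_le vv rr).trans (max_le le_rfl (hdom.trans hAB))
        · have hPt : ((Pl t : ℝ≥0) : ℝ≥0∞) ≤ (vv : ℝ≥0∞) := by
            exact_mod_cast hden.trans_eq hvmax
          calc Ttl p (List.replicate aa 0 ++ x :: vv :: rr)
              = (x : ℝ≥0∞) / (vv : ℝ≥0∞) + Ttl p (List.replicate aa 0 ++ vv :: rr) := by
                rw [Ttl_replicate_zero, Ttl_cons₂, Ttl_replicate_zero]
            _ ≤ (x : ℝ≥0∞) / ((Pl t : ℝ≥0) : ℝ≥0∞) + Tl p t := by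
                exact add_le_add (ENNReal.div_le_div_left hPt x) httl
            _ = Tl p (x :: t) := by simp [Tl, htne]
        · refine (Pl_cons_le x t).trans ?_
          exact max_le (le_max_left _ _) ((hden.trans_eq hvmax).trans (le_max_right x vv))
      · -- SubB : merge x into vv
        push_neg at hAB
        obtain ⟨w, r', rfl⟩ : ∃ w r', rr = w :: r' := by
          cases rr with
          | nil => exact absurd hAB (by exact not_lt_zero')
          | cons w r' => exact ⟨w, r', rfl⟩
        have hwP : Pl t ≤ w := hden.trans (max_le hAB.le (by simp))
        have hwP' : ((Pl t : ℝ≥0) : ℝ≥0∞) ≤ ((w : ℝ≥0) : ℝ≥0∞) := by exact_mod_cast hwP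
        refine ⟨aa + 1, x + vv, w :: r', ?_, ?_, hdom, ?_, ?_⟩
        · simp only [List.length_append, List.length_replicate, List.length_cons] at hlen ⊢
          omega
        · simp only [List.sum_cons, ht] at hsum ⊢
          rw [add_assoc, hsum]
        · calc Ttl p (List.replicate (aa+1) 0 ++ (x + vv) :: w :: r')
              = ((x + vv : ℝ≥0) : ℝ≥0∞) / (w : ℝ≥0∞) + Ttl p (w :: r') := by
                rw [Ttl_replicate_zero, Ttl_cons₂]
            _ = (x : ℝ≥0∞) / (w : ℝ≥0∞) + ((vv : ℝ≥0∞) / (w : ℝ≥0∞) + Ttl p (w :: r')) := by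
                rw [ENNReal.coe_add, div_eq_mul_inv, div_eq_mul_inv, div_eq_mul_inv, add_mul,
                  add_assoc]
            _ = (x : ℝ≥0∞) / (w : ℝ≥0∞) + Ttl p (List.replicate aa 0 ++ vv :: w :: r') := by
                rw [Ttl_replicate_zero, Ttl_cons₂]
            _ ≤ (x : ℝ≥0∞) / ((Pl t : ℝ≥0) : ℝ≥0∞) + Tl p t :=
                add_le_add (ENNReal.div_le_div_left hwP' x) httl
            _ = Tl p (x :: t) := by simp [Tl, htne]
        · refine (Pl_cons_le x t).trans ?_
          exact max_le (le_max_of_le_left le_self_add) (hwP.trans (le_max_right _ _))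


/-! ### dictionaries between integer-indexed functions and lists -/

noncomputable def listFrom (x : ℤ → ℝ) : ℕ → List ℝ≥0
  | 0 => []
  | n+1 => Real.toNNReal (x (-(n:ℤ))) :: listFrom x n

@[simp] lemma length_listFrom (x : ℤ → ℝ) (n : ℕ) : (listFrom x n).length = n := by
  induction n with
  | zero => rfl
  | succ n ih => simp [listFrom, ih]

lemma getD_listFrom (x : ℤ → ℝ) {n k : ℕ} (hk : k < n) :
    (listFrom x n).getD k 0 = Real.toNNReal (x ((k : ℤ) + 1 - n)) := by
  induction n generalizing k with
  | zero => omega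
  | succ n ih =>
    rcases k with _ | k
    · rw [listFrom, List.getD_cons_zero]
      norm_num
    · rw [listFrom, List.getD_cons_succ, ih (by omega)]
      congr 2
      push_cast
      ring

lemma sum_take_getD (t : List ℝ≥0) (j : ℕ) :
    (t.take j).sum = ∑ u ∈ Finset.range j, t.getD u 0 := by
  induction t generalizing j with
  | nil =>
    simp only [List.take_nil, List.sum_nil]
    rw [eq_comm, Finset.sum_eq_zero]
    intro u hu
    rfl
  | cons a s ih =>
    rcases j with _ | j
    · simp
    · rw [List.take_succ_cons, List.sum_cons, Finset.sum_range_succ', ih]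
      simp only [List.getD_cons_succ, List.getD_cons_zero]
      rw [add_comm]

lemma getD_drop (l : List ℝ≥0) (m u : ℕ) :
    (l.drop m).getD u 0 = l.getD (m + u) 0 := by
  induction l generalizing m with
  | nil => simp
  | cons a s ih =>
    rcases m with _ | m
    · simp
    · rw [List.drop_succ_cons, ih]
      have h : m + 1 + u = (m + u) + 1 := by omega
      rw [h, List.getD_cons_succ]

lemma sum_Icc_eq_range {M : Type*} [AddCommMonoid M] (f : ℤ → M) (a : ℤ) (r : ℕ) :
    ∑ i ∈ Finset.Icc a (a + r - 1), f i = ∑ u ∈ Finset.range r, f (a + u) := by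
  induction r with
  | zero =>
    rw [Finset.range_zero, Finset.sum_empty, Finset.Icc_eq_empty (by omega), Finset.sum_empty]
  | succ r ih =>
    have hins : Finset.Icc a (a + (r+1 : ℕ) - 1) = insert (a + r) (Finset.Icc a (a + r - 1)) := by
      ext j
      simp only [Finset.mem_Icc, Finset.mem_insert]
      omega
    rw [hins, Finset.sum_insert (by simp only [Finset.mem_Icc]; omega),
      Finset.sum_range_succ, ← ih, add_comm]


lemma TtlSum (q : ℝ≥0∞) (l : List ℝ≥0) :
    Ttl q l = ∑ k ∈ Finset.range l.length,
      (l.getD k 0 : ℝ≥0∞) / (if k + 1 = l.length then q else ((l.getD (k+1) 0 : ℝ≥0) : ℝ≥0∞)) := by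
  induction l with
  | nil => simp [Ttl]
  | cons a s ih =>
    rw [Ttl, ih, List.length_cons, Finset.sum_range_succ', add_comm]
    congr 1
    · apply Finset.sum_congr rfl
      intro k hk
      simp only [List.getD_cons_succ]
      congr 1
      by_cases h : k + 1 = s.length
      · rw [if_pos h, if_pos (by omega)]
      · rw [if_neg h, if_neg (by omega)]
    · rcases s with _ | ⟨b, s'⟩
      · rw [show ((a :: ([] : List ℝ≥0)).getD 0 0) = a from rfl]
        simp
      · rw [show ((a :: b :: s').getD 0 0) = a from rfl,
          show ((a :: b :: s').getD 1 0) = b from rfl]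
        simp

lemma TlSum (q : ℝ≥0∞) (l : List ℝ≥0) :
    Tl q l = ∑ k ∈ Finset.range l.length,
      (l.getD k 0 : ℝ≥0∞) /
        (if k + 1 = l.length then q else ((Pl (l.drop (k+1)) : ℝ≥0) : ℝ≥0∞)) := by
  induction l with
  | nil => simp [Tl]
  | cons a s ih =>
    rw [Tl, ih, List.length_cons, Finset.sum_range_succ', add_comm]
    congr 1
    · apply Finset.sum_congr rfl
      intro k hk
      simp only [List.getD_cons_succ, List.drop_succ_cons]
      congr 1
      by_cases h : k + 1 = s.length
      · rw [if_pos h, if_pos (by omega)]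
      · rw [if_neg h, if_neg (by omega)]
    · rcases s with _ | ⟨b, s'⟩
      · rw [show ((a :: ([] : List ℝ≥0)).getD 0 0) = a from rfl]
        simp
      · rw [show (List.drop (0+1) (a :: b :: s')) = b :: s' from rfl,
          show ((a :: b :: s').getD 0 0) = a from rfl]
        simp

/-! ### mNeg facts -/

lemma mNeg_nonempty_bdd {x : ℤ → ℝ} (i : ℤ) (hi : i ≤ -1) :
    (x (i+1)) ∈ {a : ℝ | ∃ r : ℤ, 1 ≤ r ∧ r ≤ -i ∧
        a = (∑ j ∈ Finset.Icc (i + 1) (i + r), x j) / (r : ℝ)} ∧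
    BddAbove {a : ℝ | ∃ r : ℤ, 1 ≤ r ∧ r ≤ -i ∧
        a = (∑ j ∈ Finset.Icc (i + 1) (i + r), x j) / (r : ℝ)} := by
  constructor
  · exact ⟨1, le_refl 1, by omega, by simp⟩
  · have hset : {a : ℝ | ∃ r : ℤ, 1 ≤ r ∧ r ≤ -i ∧
        a = (∑ j ∈ Finset.Icc (i + 1) (i + r), x j) / (r : ℝ)}
        = (fun r : ℤ => (∑ j ∈ Finset.Icc (i + 1) (i + r), x j) / (r : ℝ)) '' (Set.Icc 1 (-i)) := by
      ext a
      simp only [Set.mem_setOf_eq, Set.mem_image, Set.mem_Icc]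
      constructor
      · rintro ⟨r, h1, h2, rfl⟩; exact ⟨r, ⟨h1, h2⟩, rfl⟩
      · rintro ⟨r, ⟨h1, h2⟩, rfl⟩; exact ⟨r, h1, h2, rfl⟩
    rw [hset]
    exact ((Set.finite_Icc _ _).image _).bddAbove

lemma le_mNeg {x : ℤ → ℝ} (i : ℤ) (hi : i ≤ -1) : x (i+1) ≤ mNeg x i :=
  le_csSup (mNeg_nonempty_bdd i hi).2 (mNeg_nonempty_bdd i hi).1


lemma Delta_nonneg {N : ℕ} {x : ℤ → ℝ} (hx : x ∈ Delta N) : ∀ i, 0 ≤ x i := hx.1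

lemma mNeg_le_Pl {N : ℕ} {x : ℤ → ℝ} (hx : x ∈ Delta N) {i : ℤ}
    (h1 : 1 - (N : ℤ) ≤ i) (h2 : i ≤ -1) :
    mNeg x i ≤ ((Pl ((listFrom x N).drop ((i + N).toNat)) : ℝ≥0) : ℝ) := by
  obtain ⟨hmem, hbdd⟩ := mNeg_nonempty_bdd (x := x) i h2
  refine csSup_le ⟨_, hmem⟩ ?_
  rintro a ⟨r, hr1, hr2, rfl⟩
  set m := (i + (N : ℤ)).toNat with hm
  have hmZ : (m : ℤ) = i + N := Int.toNat_of_nonneg (by omega)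
  set r' := r.toNat with hr'
  have hrZ : (r' : ℤ) = r := Int.toNat_of_nonneg (by omega)
  have hsum : (((((listFrom x N).drop m).take r').sum : ℝ≥0) : ℝ)
      = ∑ j ∈ Finset.Icc (i + 1) (i + r), x j := by
    rw [sum_take_getD, show (i + r) = (i + 1) + (r' : ℤ) - 1 by omega, sum_Icc_eq_range,
      NNReal.coe_sum]
    apply Finset.sum_congr rfl
    intro u hu
    have hu' : u < r' := Finset.mem_range.1 hu
    rw [getD_drop, getD_listFrom x (by omega), Real.coe_toNNReal _ (hx.1 _)]
    congr 1
    push_cast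
    omega
  have hPl : ((((listFrom x N).drop m).take r').sum) / ((r' : ℕ) : ℝ≥0)
      ≤ Pl ((listFrom x N).drop m) := by
    apply Finset.le_sup (f := fun j => ((((listFrom x N).drop m).take j).sum) / (j : ℝ≥0))
    simp only [Finset.mem_Icc, List.length_drop, length_listFrom]
    omega
  have := NNReal.coe_le_coe.2 hPl
  rw [NNReal.coe_div] at this
  rw [← hsum]
  have hrr : ((r' : ℕ) : ℝ) = (r : ℝ) := by exact_mod_cast congrArg (Int.cast : ℤ → ℝ) hrZ
  rw [← hrr]
  exact_mod_cast this

lemma Tval_eq {N : ℕ} {x : ℤ → ℝ} (hx : x ∈ Delta N) (p : ℝ) :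
    Tval x p = (∑ i ∈ Finset.Icc (1 - (N : ℤ)) (-1),
        ENNReal.ofReal (x i) / ENNReal.ofReal (mNeg x i)) +
      ENNReal.ofReal (x 0) / ENNReal.ofReal p := by
  unfold Tval
  congr 1
  have hre : (∑' i : {z : ℤ // z ≤ -1}, ENNReal.ofReal (x i) / ENNReal.ofReal (mNeg x i))
      = ∑' i : ↑{z : ℤ | z ≤ -1}, ENNReal.ofReal (x i) / ENNReal.ofReal (mNeg x i) := rfl
  rw [hre, tsum_subtype {z : ℤ | z ≤ -1}
    (fun i => ENNReal.ofReal (x i) / ENNReal.ofReal (mNeg x i))]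
  rw [tsum_eq_sum (s := Finset.Icc (1 - (N : ℤ)) (-1))
    (f := fun i => Set.indicator {z : ℤ | z ≤ -1}
      (fun i => ENNReal.ofReal (x i) / ENNReal.ofReal (mNeg x i)) i)]
  · apply Finset.sum_congr rfl
    intro i hi
    rw [Set.indicator_of_mem]
    exact (Finset.mem_Icc.1 hi).2
  · intro i hi
    rw [Finset.mem_Icc] at hi
    by_cases hz : i ≤ -1
    · rw [Set.indicator_of_mem (show i ∈ {z : ℤ | z ≤ -1} from hz)]
      have hx0 : x i = 0 := hx.2.1 i (by omega)
      rw [hx0]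
      simp
    · exact Set.indicator_of_notMem (show i ∉ {z : ℤ | z ≤ -1} from hz) _

lemma Tval_le_Ttil {N : ℕ} {x : ℤ → ℝ} (hx : x ∈ Delta N) (p : ℝ) :
    Tval x p ≤ Ttil N x p := by
  rw [Tval_eq hx p, Ttil]
  apply add_le_add_left
  apply Finset.sum_le_sum
  intro i hi
  rw [Finset.mem_Icc] at hi
  apply ENNReal.div_le_div_left
  exact ENNReal.ofReal_le_ofReal (le_mNeg i hi.2)


lemma Tl_le_Tval {N : ℕ} (hN : 1 ≤ N) {x : ℤ → ℝ} (hx : x ∈ Delta N) (p : ℝ) :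
    Tl (ENNReal.ofReal p) (listFrom x N) ≤ Tval x p := by
  obtain ⟨M, rfl⟩ : ∃ M, N = M + 1 := ⟨N - 1, by omega⟩
  rw [Tval_eq hx p, TlSum, length_listFrom, Finset.sum_range_succ]
  have hIcc : ∑ i ∈ Finset.Icc (1 - ((M+1 : ℕ) : ℤ)) (-1),
      ENNReal.ofReal (x i) / ENNReal.ofReal (mNeg x i)
      = ∑ u ∈ Finset.range M,
        ENNReal.ofReal (x (1 - ((M+1:ℕ):ℤ) + u)) / ENNReal.ofReal (mNeg x (1 - ((M+1:ℕ):ℤ) + u)) := by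
    rw [show (-1 : ℤ) = (1 - ((M+1:ℕ):ℤ)) + (M:ℕ) - 1 by push_cast; ring]
    exact sum_Icc_eq_range _ _ _
  rw [hIcc]
  apply add_le_add
  · apply Finset.sum_le_sum
    intro k hk
    have hkM : k < M := Finset.mem_range.1 hk
    set i : ℤ := 1 - ((M+1:ℕ):ℤ) + k with hi
    have hnum : ((listFrom x (M+1)).getD k 0 : ℝ≥0∞) = ENNReal.ofReal (x i) := by
      rw [getD_listFrom x (by omega)]
      have : ((k:ℤ) + 1 - ((M+1:ℕ):ℤ)) = i := by omega
      rw [this]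
      rfl
    have hcond : ¬ (k + 1 = M + 1) := by omega
    rw [if_neg hcond, hnum]
    apply ENNReal.div_le_div_left
    have hb := mNeg_le_Pl (N := M+1) hx (i := i) (by push_cast; omega) (by push_cast; omega)
    have hidx : (i + ((M+1:ℕ):ℤ)).toNat = k + 1 := by omega
    rw [hidx] at hb
    calc ENNReal.ofReal (mNeg x i)
        ≤ ENNReal.ofReal ((Pl ((listFrom x (M+1)).drop (k+1)) : ℝ≥0) : ℝ) :=
          ENNReal.ofReal_le_ofReal hb
      _ = ((Pl ((listFrom x (M+1)).drop (k+1)) : ℝ≥0) : ℝ≥0∞) := ENNReal.ofReal_coe_nnreal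
  · rw [if_pos rfl, getD_listFrom x (by omega)]
    have : ((M:ℤ) + 1 - ((M+1:ℕ):ℤ)) = 0 := by push_cast; ring
    rw [this]
    rfl

lemma listFrom_sum {N : ℕ} {x : ℤ → ℝ} (hx : x ∈ Delta N) :
    (((listFrom x N).sum : ℝ≥0) : ℝ) = 1 := by
  have htake : (listFrom x N).take N = listFrom x N := by
    have h : (listFrom x N).take (listFrom x N).length = listFrom x N := List.take_length
    rwa [length_listFrom] at h
  have h1 : (listFrom x N).sum = ∑ u ∈ Finset.range N, (listFrom x N).getD u 0 :=
    calc (listFrom x N).sum = ((listFrom x N).take N).sum := by rw [htake]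
      _ = ∑ u ∈ Finset.range N, (listFrom x N).getD u 0 := sum_take_getD _ N
  rw [h1, NNReal.coe_sum]
  have h2 : ∀ u ∈ Finset.range N, (((listFrom x N).getD u 0 : ℝ≥0) : ℝ) = x (1 - (N:ℤ) + u) := by
    intro u hu
    rw [getD_listFrom x (Finset.mem_range.1 hu), Real.coe_toNNReal _ (hx.1 _)]
    congr 1
    push_cast
    ring
  rw [Finset.sum_congr rfl h2]
  have h3 : ∑ u ∈ Finset.range N, x (1 - (N:ℤ) + u)
      = ∑ i ∈ Finset.Icc (1 - (N:ℤ)) 0, x i := by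
    rw [show (0 : ℤ) = (1 - (N:ℤ)) + (N:ℕ) - 1 by push_cast; ring]
    exact (sum_Icc_eq_range _ _ _).symm
  rw [h3]
  have h4 := hx.2.2.2
  rw [show ((1:ℤ) - (N:ℤ)) = (1 - (N:ℤ)) by ring] at h4 ⊢
  exact h4


noncomputable def funOf (N : ℕ) (y : List ℝ≥0) : ℤ → ℝ := fun i =>
  if 1 - (N : ℤ) ≤ i ∧ i ≤ 0 then ((y.getD (i + N - 1).toNat 0 : ℝ≥0) : ℝ) else 0

lemma funOf_eval {N : ℕ} (y : List ℝ≥0) {u : ℕ} (hu : u < N) :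
    funOf N y (1 - (N : ℤ) + u) = ((y.getD u 0 : ℝ≥0) : ℝ) := by
  have hc : 1 - (N : ℤ) ≤ 1 - (N : ℤ) + u ∧ 1 - (N : ℤ) + u ≤ 0 := by omega
  rw [funOf]
  simp only [if_pos hc]
  have h2 : (1 - (N:ℤ) + u + N - 1).toNat = u := by omega
  rw [h2]

lemma funOf_mem_Delta {N : ℕ} (hN : 1 ≤ N) (y : List ℝ≥0)
    (hsum : ((y.sum : ℝ≥0) : ℝ) = 1) (hlen : y.length = N) : funOf N y ∈ Delta N := by
  refine ⟨?_, ?_, ?_, ?_⟩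
  · intro i
    simp only [funOf]
    split <;> positivity
  · intro i hi
    simp only [funOf, if_neg (show ¬(1 - (N:ℤ) ≤ i ∧ i ≤ 0) by omega)]
  · intro i hi
    simp only [funOf, if_neg (show ¬(1 - (N:ℤ) ≤ i ∧ i ≤ 0) by omega)]
  · have htake : y.take N = y := by
      have h : y.take y.length = y := List.take_length
      rwa [hlen] at h
    have h3 : ∑ i ∈ Finset.Icc (1 - (N:ℤ)) 0, funOf N y i
        = ∑ u ∈ Finset.range N, funOf N y (1 - (N:ℤ) + u) := by
      rw [show (0 : ℤ) = (1 - (N:ℤ)) + (N:ℕ) - 1 by push_cast; ring]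
      exact sum_Icc_eq_range _ _ _
    rw [h3]
    have h4 : ∀ u ∈ Finset.range N, funOf N y (1 - (N:ℤ) + u) = ((y.getD u 0 : ℝ≥0) : ℝ) :=
      fun u hu => funOf_eval y (Finset.mem_range.1 hu)
    rw [Finset.sum_congr rfl h4, ← NNReal.coe_sum, ← sum_take_getD, htake, hsum]

lemma Ttil_funOf {N : ℕ} (hN : 1 ≤ N) (y : List ℝ≥0) (hlen : y.length = N) (p : ℝ) :
    Ttil N (funOf N y) p = Ttl (ENNReal.ofReal p) y := by
  obtain ⟨M, rfl⟩ : ∃ M, N = M + 1 := ⟨N - 1, by omega⟩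
  rw [Ttil, TtlSum, hlen, Finset.sum_range_succ]
  have hIcc : ∑ i ∈ Finset.Icc (1 - ((M+1:ℕ) : ℤ)) (-1),
      ENNReal.ofReal (funOf (M+1) y i) / ENNReal.ofReal (funOf (M+1) y (i + 1))
      = ∑ u ∈ Finset.range M, ENNReal.ofReal (funOf (M+1) y (1 - ((M+1:ℕ):ℤ) + u)) /
          ENNReal.ofReal (funOf (M+1) y ((1 - ((M+1:ℕ):ℤ) + u) + 1)) := by
    rw [show (-1 : ℤ) = (1 - ((M+1:ℕ):ℤ)) + (M:ℕ) - 1 by push_cast; ring]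
    exact sum_Icc_eq_range (fun i => ENNReal.ofReal (funOf (M+1) y i) /
      ENNReal.ofReal (funOf (M+1) y (i + 1))) _ _
  rw [hIcc]
  congr 1
  · apply Finset.sum_congr rfl
    intro u hu
    have huM : u < M := Finset.mem_range.1 hu
    rw [funOf_eval y (by omega), show ((1 - ((M+1:ℕ):ℤ) + u) + 1) = 1 - ((M+1:ℕ):ℤ) + (u+1 : ℕ) by push_cast; ring,
      funOf_eval y (by omega), ENNReal.ofReal_coe_nnreal, ENNReal.ofReal_coe_nnreal,
      if_neg (by omega)]
  · rw [show (0 : ℤ) = 1 - ((M+1:ℕ):ℤ) + (M:ℕ) by push_cast; ring,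
      funOf_eval y (by omega), ENNReal.ofReal_coe_nnreal, if_pos rfl]


/-- For every `N ≥ 1` and `p > 0`, `T̃_N*(p) = T_N*(p)`. -/
theorem TtilStar_eq_Tstar (N : ℕ) (hN : 1 ≤ N) (p : ℝ) (hp : 0 < p) :
    TtilStar N p = Tstar N p := by
  apply le_antisymm
  · -- hard direction
    rw [Tstar]
    apply le_sInf
    rintro t ⟨x, hx, rfl⟩
    have hLne : listFrom x N ≠ [] := by
      intro h
      have := congrArg List.length h
      rw [length_listFrom] at this
      simp at this
      omega
    obtain ⟨aa, v, r, hlen, hsum, hdom, httl, hden⟩ :=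
      listMain (ENNReal.ofReal p) (listFrom x N) hLne
    set y : List ℝ≥0 := List.replicate aa 0 ++ v :: r with hy
    have hylen : y.length = N := by
      rw [hy, hlen, length_listFrom]
    have hysum : ((y.sum : ℝ≥0) : ℝ) = 1 := by
      have h1 : y.sum = v + r.sum := by
        rw [hy, List.sum_append, List.sum_replicate, smul_zero, zero_add, List.sum_cons]
      rw [h1, hsum]
      exact listFrom_sum hx
    have hx' : funOf N y ∈ Delta N := funOf_mem_Delta hN y hysum hylen
    have hmem : Ttil N (funOf N y) p ∈ {t : ℝ≥0∞ | ∃ z ∈ Delta N, t = Ttil N z p} :=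
      ⟨funOf N y, hx', rfl⟩
    calc TtilStar N p ≤ Ttil N (funOf N y) p := sInf_le hmem
      _ = Ttl (ENNReal.ofReal p) y := Ttil_funOf hN y hylen p
      _ ≤ Tl (ENNReal.ofReal p) (listFrom x N) := httl
      _ ≤ Tval x p := Tl_le_Tval hN hx p
  · -- easy direction
    rw [TtilStar]
    apply le_sInf
    rintro t ⟨x, hx, rfl⟩
    have hmem : Tval x p ∈ {t : ℝ≥0∞ | ∃ z ∈ Delta N, t = Tval z p} := ⟨x, hx, rfl⟩
    exact (sInf_le hmem).trans (Tval_le_Ttil hx p)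
end
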